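/- arXiv:2204.00165 — 5 statements merged into one kernel-verified Lean document; each statement's English description precedes it below -/
import Mathlib

section
/- A permutation π of the multiset {1,1,...,n,n} avoids the patterns 1221 and 2112 if and only if the subsequence of π formed by the first occurrence of each value equals the subsequence formed by the second occurrence of each value. -/
attribute [local instance] Classical.propDecidable

/-- The word 1^k 2^k ... n^k. -/
def baseWord (n k : ℕ) : List ℕ := (List.range n).flatMap (fun i => List.replicate k (i+1))

/-- All permutations of the multiset with k copies of each of 1,...,n. -/
noncomputable def multiPerms (n k : ℕ) : Finset (List ℕ) := (baseWord n k).permutations.toFinset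

/-- Number of descents of a word. -/
def des (w : List ℕ) : ℕ := ((w.zip w.tail).filter (fun p => decide (p.2 < p.1))).length
/-- Number of plateaus of a word. -/
def plat (w : List ℕ) : ℕ := ((w.zip w.tail).filter (fun p => decide (p.2 = p.1))).length
/-- Number of weak descents of a word. -/
def wdes (w : List ℕ) : ℕ := ((w.zip w.tail).filter (fun p => decide (p.2 ≤ p.1))).length

/-- Avoidance of the patterns 1221 and 2112: there are no positions i < j < l < m with
w_i = w_m, w_j = w_l and w_i ≠ w_j. -/
def avoids (w : List ℕ) : Prop := ∀ i j l m, i < j → j < l → l < m → m < w.length →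
  w.getD i 0 = w.getD m 0 → w.getD j 0 = w.getD l 0 → w.getD i 0 = w.getD j 0

/-- Nonnesting permutations of the multiset {1,1,...,n,n}. -/
noncomputable def nonnest (n : ℕ) : Finset (List ℕ) := (multiPerms n 2).filter avoids

open List


section Helpers

/-- minimality of indexOf -/
lemma indexOf_le_of_getElem {w : List ℕ} {a : ℕ} {k : ℕ} (hk : k < w.length)
    (ha : w[k] = a) : w.idxOf a ≤ k := by
  induction w generalizing k with
  | nil => simp at hk
  | cons x t ih =>
    rw [idxOf_cons]
    cases k with
    | zero =>
      simp only [getElem_cons_zero] at ha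
      simp [ha]
    | succ k =>
      by_cases hxa : x = a
      · simp [hxa]
      · have hk' : k < t.length := by simpa using hk
        have := ih hk' (by simpa using ha)
        have hb : (x == a) = false := by simpa using hxa
        simp [hb]
        omega

lemma not_mem_take_indexOf {w : List ℕ} {a : ℕ} : a ∉ w.take (w.idxOf a) := by
  intro h
  obtain ⟨i, hi, hia⟩ := mem_iff_getElem.1 h
  have hi' : i < w.idxOf a ∧ i < w.length := by
    rw [length_take] at hi; omega
  rw [getElem_take] at hia
  have := indexOf_le_of_getElem hi'.2 hia
  omega

lemma mem_take_of_indexOf_lt {w : List ℕ} {a : ℕ} {k : ℕ} (ha : a ∈ w)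
    (h : w.idxOf a < k) : a ∈ w.take k := by
  have hlen := idxOf_lt_length_iff.2 ha
  refine mem_iff_getElem.2 ⟨w.idxOf a, ?_, ?_⟩
  · rw [length_take]; omega
  · rw [getElem_take]; exact getElem_idxOf hlen

/-- `a` occurs before `b` in `m`. -/
def Bef (m : List ℕ) (a b : ℕ) : Prop := ∃ s t, m = s ++ t ∧ a ∈ s ∧ b ∈ t

lemma Bef.mem_left {m : List ℕ} {a b : ℕ} (h : Bef m a b) : a ∈ m := by
  obtain ⟨s, t, rfl, ha, _⟩ := h; exact mem_append_left _ ha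

lemma Bef.mem_right {m : List ℕ} {a b : ℕ} (h : Bef m a b) : b ∈ m := by
  obtain ⟨s, t, rfl, _, hb⟩ := h; exact mem_append_right _ hb

lemma Bef.cons {m : List ℕ} {a b x : ℕ} (h : Bef m a b) : Bef (x :: m) a b := by
  obtain ⟨s, t, rfl, ha, hb⟩ := h
  exact ⟨x :: s, t, rfl, mem_cons_of_mem _ ha, hb⟩

lemma pairwise_bef (m : List ℕ) : m.Pairwise (Bef m) := by
  induction m with
  | nil => simp
  | cons x t ih =>
    refine Pairwise.cons ?_ (ih.imp fun h => h.cons)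
    intro b hb
    exact ⟨[x], t, rfl, by simp, hb⟩

lemma indexOf_lt_of_bef {m : List ℕ} (hm : m.Nodup) {a b : ℕ} (h : Bef m a b) :
    m.idxOf a < m.idxOf b := by
  obtain ⟨s, t, rfl, ha, hb⟩ := h
  have hdisj := disjoint_of_nodup_append hm
  have hbs : b ∉ s := fun hbs => hdisj hbs hb
  rw [idxOf_append_of_mem ha, idxOf_append_of_notMem hbs]
  have := idxOf_lt_length_iff.2 ha
  omega

lemma bef_asymm {m : List ℕ} (hm : m.Nodup) {a b : ℕ} (h1 : Bef m a b) (h2 : Bef m b a) :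
    False := by
  have := indexOf_lt_of_bef hm h1
  have := indexOf_lt_of_bef hm h2
  omega

lemma Bef.reverse {m : List ℕ} {a b : ℕ} (h : Bef m a b) : Bef m.reverse b a := by
  obtain ⟨s, t, rfl, ha, hb⟩ := h
  exact ⟨t.reverse, s.reverse, by rw [reverse_append], by simpa, by simpa⟩

lemma union_split (s : List ℕ) (m : List ℕ) :
    ∃ p, s ∪ m = p ++ m ∧ ∀ x ∈ s, x ∉ m → x ∈ p := by
  induction s with
  | nil => exact ⟨[], by simp, by simp⟩
  | cons x s ih =>
    obtain ⟨p, hp, hmem⟩ := ih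
    by_cases hx : x ∈ s ∪ m
    · refine ⟨p, ?_, ?_⟩
      · rw [cons_union, insert_of_mem hx, hp]
      · intro y hy hym
        rcases mem_cons.1 hy with rfl | hy'
        · rcases mem_union_iff.1 hx with h | h
          · exact hmem y h hym
          · exact absurd h hym
        · exact hmem y hy' hym
    · refine ⟨x :: p, ?_, ?_⟩
      · rw [cons_union, insert_of_not_mem hx, hp, cons_append]
      · intro y hy hym
        rcases mem_cons.1 hy with rfl | hy'
        · exact mem_cons_self
        · exact mem_cons_of_mem _ (hmem y hy' hym)

lemma bef_dedup_of_split {w s t : List ℕ} {a b : ℕ} (hw : w = s ++ t)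
    (ha : a ∈ s) (hat : a ∉ t) (hb : b ∈ t) : Bef w.dedup a b := by
  subst hw
  rw [dedup_append]
  obtain ⟨p, hp, hmem⟩ := union_split s t.dedup
  exact ⟨p, t.dedup, hp, hmem a ha (by simpa using hat), by simpa using hb⟩

lemma bef_dedup_of_rev_lt {w : List ℕ} {a b : ℕ} (ha : a ∈ w)
    (h : w.reverse.idxOf b < w.reverse.idxOf a) : Bef w.dedup a b := by
  have hb' : b ∈ w.reverse :=
    idxOf_lt_length_iff.1 (lt_of_lt_of_le h idxOf_le_length)
  have hsplit : w.reverse = w.reverse.take (w.reverse.idxOf a) ++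
      w.reverse.drop (w.reverse.idxOf a) := (take_append_drop _ _).symm
  set u := w.reverse.take (w.reverse.idxOf a) with hu
  set v := w.reverse.drop (w.reverse.idxOf a) with hv
  have hbu : b ∈ u := mem_take_of_indexOf_lt hb' h
  have hau : a ∉ u := not_mem_take_indexOf
  refine bef_dedup_of_split (s := v.reverse) (t := u.reverse) ?_ ?_ (by simpa using hau) ?_
  · rw [← reverse_reverse w, hsplit, reverse_append]
  · have haw : a ∈ w.reverse := by simpa using ha
    rw [hsplit] at haw
    rcases mem_append.1 haw with h' | h'
    · exact absurd h' hau
    · simpa using h'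
  · simpa using hbu

lemma rev_lt_of_bef_dedup {w : List ℕ} {a b : ℕ} (hab : a ≠ b) (h : Bef w.dedup a b) :
    w.reverse.idxOf b < w.reverse.idxOf a := by
  have ha : a ∈ w := by have := h.mem_left; simpa using this
  have hb : b ∈ w := by have := h.mem_right; simpa using this
  by_contra hle
  push_neg at hle
  have hne : w.reverse.idxOf a ≠ w.reverse.idxOf b := by
    intro he
    exact hab ((idxOf_inj (by simpa using ha)).1 he)
  have hlt : w.reverse.idxOf a < w.reverse.idxOf b := by omega
  exact bef_asymm (nodup_dedup w) h (bef_dedup_of_rev_lt hb hlt)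

lemma bef_A_of_idx_lt {w : List ℕ} {a b : ℕ} (hb : b ∈ w)
    (h : w.idxOf a < w.idxOf b) : Bef w.reverse.dedup.reverse a b := by
  have : Bef w.reverse.dedup b a := by
    apply bef_dedup_of_rev_lt (by simpa using hb)
    rwa [reverse_reverse]
  exact this.reverse

lemma idx_lt_of_bef_A {w : List ℕ} {a b : ℕ} (hab : a ≠ b)
    (h : Bef w.reverse.dedup.reverse a b) : w.idxOf a < w.idxOf b := by
  have h' : Bef w.reverse.dedup b a := by
    have := h.reverse
    rwa [reverse_reverse] at this
  have := rev_lt_of_bef_dedup (Ne.symm hab) h'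
  rwa [reverse_reverse] at this

/-- first occurrences agree with last occurrences -/
def SameOrder (w : List ℕ) : Prop := ∀ a b : ℕ, a ∈ w → b ∈ w → a ≠ b →
  (w.idxOf a < w.idxOf b ↔ w.reverse.idxOf b < w.reverse.idxOf a)

lemma dedup_eq_iff_sameOrder (w : List ℕ) :
    w.dedup = w.reverse.dedup.reverse ↔ SameOrder w := by
  constructor
  · intro h a b ha hb hab
    constructor
    · intro hlt
      have hA := bef_A_of_idx_lt hb hlt
      rw [← h] at hA
      exact rev_lt_of_bef_dedup hab hA
    · intro hlt
      have hB := bef_dedup_of_rev_lt ha hlt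
      rw [h] at hB
      exact idx_lt_of_bef_A hab hB
  · intro hC
    have hanti : IsAntisymm ℕ (fun a b => a = b ∨ w.idxOf a < w.idxOf b) :=
      ⟨fun a b h1 h2 => by rcases h1 with h1 | h1 <;> rcases h2 with h2 | h2 <;> omega⟩
    have hperm : w.dedup ~ w.reverse.dedup.reverse := by
      rw [perm_ext_iff_of_nodup (nodup_dedup w) (nodup_reverse.2 (nodup_dedup _))]
      intro x; simp
    refine Perm.eq_of_pairwise (le := fun a b => a = b ∨ w.idxOf a < w.idxOf b)
      (fun a b _ _ h1 h2 => hanti.antisymm a b h1 h2) ?_ ?_ hperm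
    · refine (pairwise_bef _).imp ?_
      intro a b hBef
      by_cases hab : a = b
      · exact Or.inl hab
      · refine Or.inr ?_
        have ha : a ∈ w := by have := hBef.mem_left; simpa using this
        have hb : b ∈ w := by have := hBef.mem_right; simpa using this
        exact (hC a b ha hb hab).2 (rev_lt_of_bef_dedup hab hBef)
    · refine (pairwise_bef _).imp ?_
      intro a b hBef
      by_cases hab : a = b
      · exact Or.inl hab
      · exact Or.inr (idx_lt_of_bef_A hab hBef)

end Helpers

section Counts

variable {w : List ℕ} {a b : ℕ}

lemma getElem_idx_eq {w : List ℕ} {i j : ℕ} (h : i = j) (hi : i < w.length) :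
    w[i] = w[j]'(h ▸ hi) := by subst h; rfl

/-- index of last occurrence -/
noncomputable def lst (w : List ℕ) (a : ℕ) : ℕ := w.length - 1 - w.reverse.idxOf a

lemma fI_lt (ha : a ∈ w) : w.idxOf a < w.length := idxOf_lt_length_iff.2 ha

lemma rI_lt (ha : a ∈ w) : w.reverse.idxOf a < w.length := by
  have := idxOf_lt_length_iff.2 (mem_reverse.2 ha)
  simpa using this

lemma lst_lt (ha : a ∈ w) : lst w a < w.length := by
  have := rI_lt ha; unfold lst; omega

lemma getElem_fI (ha : a ∈ w) : w[w.idxOf a]'(fI_lt ha) = a := getElem_idxOf (fI_lt ha)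

lemma getElem_lst (ha : a ∈ w) : w[lst w a]'(lst_lt ha) = a := by
  have hr : w.reverse.idxOf a < w.reverse.length := by simpa using rI_lt ha
  have h1 : w.reverse[w.reverse.idxOf a] = a := getElem_idxOf hr
  rw [getElem_reverse] at h1
  have he : lst w a = w.length - 1 - w.reverse.idxOf a := rfl
  exact (getElem_idx_eq he (lst_lt ha)).trans h1

lemma le_lst {k : ℕ} (hk : k < w.length) (hval : w[k] = a) : k ≤ lst w a := by
  have hrev : w.reverse[w.length - 1 - k]'(by simp only [length_reverse]; omega) = a := by
    rw [getElem_reverse]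
    rw [← hval]
    exact getElem_idx_eq (by omega) (by omega)
  have := indexOf_le_of_getElem (by simp only [length_reverse]; omega) hrev
  unfold lst; omega

lemma two_le_count {k1 k2 : ℕ} (h12 : k1 < k2) (h2 : k2 < w.length)
    (e1 : w[k1]'(by omega) = a) (e2 : w[k2] = a) : 2 ≤ w.count a := by
  have hsplit : w.count a = (w.take (k1+1)).count a + (w.drop (k1+1)).count a := by
    conv_lhs => rw [← take_append_drop (k1+1) w]
    rw [count_append]
  have m1 : a ∈ w.take (k1+1) := by
    refine mem_iff_getElem.2 ⟨k1, ?_, ?_⟩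
    · rw [length_take]; omega
    · rw [getElem_take]; exact e1
  have m2 : a ∈ w.drop (k1+1) := by
    refine mem_iff_getElem.2 ⟨k2 - (k1+1), ?_, ?_⟩
    · rw [length_drop]; omega
    · rw [getElem_drop]
      rw [← e2]
      exact getElem_idx_eq (by omega) (by omega)
  have c1 := count_pos_iff.2 m1
  have c2 := count_pos_iff.2 m2
  omega

lemma three_le_count {k1 k2 k3 : ℕ} (h12 : k1 < k2) (h23 : k2 < k3) (h3 : k3 < w.length)
    (e1 : w[k1]'(by omega) = a) (e2 : w[k2]'(by omega) = a) (e3 : w[k3] = a) :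
    3 ≤ w.count a := by
  have hsplit : w.count a = (w.take (k1+1)).count a + (w.drop (k1+1)).count a := by
    conv_lhs => rw [← take_append_drop (k1+1) w]
    rw [count_append]
  have m1 : a ∈ w.take (k1+1) := by
    refine mem_iff_getElem.2 ⟨k1, ?_, ?_⟩
    · rw [length_take]; omega
    · rw [getElem_take]; exact e1
  have hd2 : (w.drop (k1+1))[k2 - (k1+1)]'(by rw [length_drop]; omega) = a := by
    rw [getElem_drop]; rw [← e2]; exact getElem_idx_eq (by omega) (by omega)
  have hd3 : (w.drop (k1+1))[k3 - (k1+1)]'(by rw [length_drop]; omega) = a := by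
    rw [getElem_drop]; rw [← e3]; exact getElem_idx_eq (by omega) (by omega)
  have c2 := two_le_count (w := w.drop (k1+1)) (by omega : k2 - (k1+1) < k3 - (k1+1))
    (by rw [length_drop]; omega) hd2 hd3
  have c1 := count_pos_iff.2 m1
  omega

lemma fI_lt_lst (ha : a ∈ w) (hc : w.count a = 2) : w.idxOf a < lst w a := by
  have h0 : a ∉ w.take (w.idxOf a) := by
    intro h
    obtain ⟨i, hi, hia⟩ := mem_iff_getElem.1 h
    have hi' : i < w.idxOf a ∧ i < w.length := by rw [length_take] at hi; omega
    rw [getElem_take] at hia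
    have := indexOf_le_of_getElem hi'.2 hia
    omega
  have hfi := fI_lt ha
  have hsplit : w.count a = (w.take (w.idxOf a)).count a + (w.drop (w.idxOf a)).count a := by
    conv_lhs => rw [← take_append_drop (w.idxOf a) w]
    rw [count_append]
  have h1 : (w.take (w.idxOf a)).count a = 0 := count_eq_zero.2 h0
  have hdropcons : w.drop (w.idxOf a) = a :: w.drop (w.idxOf a + 1) := by
    rw [drop_eq_getElem_cons hfi, getElem_fI ha]
  have h2 : (w.drop (w.idxOf a + 1)).count a = 1 := by
    have : (w.drop (w.idxOf a)).count a = (w.drop (w.idxOf a + 1)).count a + 1 := by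
      rw [hdropcons, count_cons_self]
    omega
  have hmem : a ∈ w.drop (w.idxOf a + 1) := count_pos_iff.1 (by omega)
  obtain ⟨i, hi, hia⟩ := mem_iff_getElem.1 hmem
  rw [length_drop] at hi
  have hval : w[w.idxOf a + 1 + i]'(by omega) = a := by
    rw [getElem_drop] at hia; exact hia
  have := le_lst (by omega) hval
  omega

lemma pos_eq_fI_or_lst {k : ℕ} (ha : a ∈ w) (hc : w.count a = 2) (hk : k < w.length)
    (hval : w[k] = a) : k = w.idxOf a ∨ k = lst w a := by
  by_contra hcon
  push_neg at hcon
  have h1 := indexOf_le_of_getElem hk hval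
  have h2 := le_lst hk hval
  have h3 := fI_lt_lst ha hc
  have hlt1 : w.idxOf a < k := by omega
  have hlt2 : k < lst w a := by omega
  have := three_le_count hlt1 hlt2 (lst_lt ha) (getElem_fI ha) hval (getElem_lst ha)
  omega

end Counts

section Final

lemma le_of_mem_baseWord {n k v : ℕ} (h : v ∈ baseWord n k) : v ≤ n := by
  simp only [baseWord, mem_flatMap, mem_range, mem_replicate] at h
  obtain ⟨i, hi, -, rfl⟩ := h
  omega

lemma count_baseWord {n v : ℕ} (h : v ∈ baseWord n 2) : (baseWord n 2).count v = 2 := by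
  induction n with
  | zero => simp [baseWord] at h
  | succ n ih =>
    have hstep : baseWord (n+1) 2 = baseWord n 2 ++ replicate 2 (n+1) := by
      simp [baseWord, range_succ]
    rw [hstep] at h ⊢
    rw [count_append]
    rcases mem_append.1 h with h' | h'
    · have hvn : v ≤ n := le_of_mem_baseWord h'
      have hne : ¬ ((n+1) = v) := by omega
      rw [ih h', count_replicate]
      simp [hne]
    · have hv1 : v = n+1 := eq_of_mem_replicate h'
      subst hv1
      have h0 : (baseWord n 2).count (n+1) = 0 := count_eq_zero.2 (fun hm => by
        have := le_of_mem_baseWord hm; omega)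
      rw [h0, count_replicate_self]

lemma avoids_iff_sameOrder {w : List ℕ} (hc : ∀ v ∈ w, w.count v = 2) :
    avoids w ↔ SameOrder w := by
  constructor
  · intro hav a b ha hb hab
    have key : ∀ x y : ℕ, x ∈ w → y ∈ w → x ≠ y →
        w.idxOf x < w.idxOf y → lst w x < lst w y := by
      intro x y hx hy hxy hlt
      by_contra hcon
      push_neg at hcon
      have hne : lst w y ≠ lst w x := by
        intro he
        refine hxy ?_
        have : y = x := by
          calc y = w[lst w y]'(lst_lt hy) := (getElem_lst hy).symm
          _ = w[lst w x]'(lst_lt hx) := getElem_idx_eq he (lst_lt hy)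
          _ = x := getElem_lst hx
        exact this.symm
      have hlt2 : lst w y < lst w x := by omega
      have e1 : w.getD (w.idxOf x) 0 = w.getD (lst w x) 0 := by
        rw [getD_eq_getElem _ _ (fI_lt hx), getD_eq_getElem _ _ (lst_lt hx),
          getElem_fI hx, getElem_lst hx]
      have e2 : w.getD (w.idxOf y) 0 = w.getD (lst w y) 0 := by
        rw [getD_eq_getElem _ _ (fI_lt hy), getD_eq_getElem _ _ (lst_lt hy),
          getElem_fI hy, getElem_lst hy]
      have := hav (w.idxOf x) (w.idxOf y) (lst w y) (lst w x) hlt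
        (fI_lt_lst hy (hc y hy)) hlt2 (lst_lt hx) e1 e2
      rw [getD_eq_getElem _ _ (fI_lt hx), getD_eq_getElem _ _ (fI_lt hy),
        getElem_fI hx, getElem_fI hy] at this
      exact hxy this
    have hra := rI_lt ha
    have hrb := rI_lt hb
    have hla : lst w a = w.length - 1 - w.reverse.idxOf a := rfl
    have hlb : lst w b = w.length - 1 - w.reverse.idxOf b := rfl
    constructor
    · intro hlt
      have := key a b ha hb hab hlt
      omega
    · intro hlt
      by_contra hcon
      push_neg at hcon
      have hne : w.idxOf a ≠ w.idxOf b := fun he =>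
        hab ((idxOf_inj ha).1 he)
      have hfb_lt : w.idxOf b < w.idxOf a := by omega
      have := key b a hb ha (Ne.symm hab) hfb_lt
      omega
  · intro hC i j l m hij hjl hlm hmL e1 e2
    by_contra hne
    have hiL : i < w.length := by omega
    have hjL : j < w.length := by omega
    have hlL : l < w.length := by omega
    set a := w.getD i 0 with hadef
    set b := w.getD j 0 with hbdef
    have hwi : w[i] = a := (getD_eq_getElem _ _ hiL).symm
    have hwj : w[j] = b := (getD_eq_getElem _ _ hjL).symm
    have hwm : w[m] = a := by
      rw [e1]
      exact (getD_eq_getElem _ _ hmL).symm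
    have hwl : w[l] = b := by
      rw [e2]
      exact (getD_eq_getElem _ _ hlL).symm
    have ha : a ∈ w := by rw [← hwi]; exact getElem_mem hiL
    have hb : b ∈ w := by rw [← hwj]; exact getElem_mem hjL
    have hia := pos_eq_fI_or_lst ha (hc a ha) hiL hwi
    have hma := pos_eq_fI_or_lst ha (hc a ha) hmL hwm
    have hjb := pos_eq_fI_or_lst hb (hc b hb) hjL hwj
    have hlb := pos_eq_fI_or_lst hb (hc b hb) hlL hwl
    have hfla := fI_lt_lst ha (hc a ha)
    have hflb := fI_lt_lst hb (hc b hb)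
    have him : i = w.idxOf a ∧ m = lst w a := by
      rcases hia with h | h <;> rcases hma with h' | h' <;> omega
    have hjl' : j = w.idxOf b ∧ l = lst w b := by
      rcases hjb with h | h <;> rcases hlb with h' | h' <;> omega
    have hrev := (hC a b ha hb hne).1 (by omega)
    have hra := rI_lt ha
    have hrb := rI_lt hb
    have hla : lst w a = w.length - 1 - w.reverse.idxOf a := rfl
    have hlb' : lst w b = w.length - 1 - w.reverse.idxOf b := rfl
    omega

end Final

/-- A permutation of {1,1,...,n,n} avoids 1221 and 2112 iff the subsequence of first
occurrences of each value equals the subsequence of second occurrences. -/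
theorem avoids_iff_first_eq_second (n : ℕ) (w : List ℕ) (hw : w ∈ multiPerms n 2) :
    avoids w ↔ w.dedup = w.reverse.dedup.reverse := by
  have hperm : w ~ baseWord n 2 := by
    have h := hw
    unfold multiPerms at h
    rw [mem_toFinset] at h
    exact mem_permutations.1 h
  have hc : ∀ v ∈ w, w.count v = 2 := by
    intro v hv
    rw [hperm.count_eq]
    exact count_baseWord (hperm.mem_iff.1 hv)
  exact (avoids_iff_sameOrder hc).trans (dedup_eq_iff_sameOrder w).symm
end

section
/- For n ≥ 1, t · N_n(t,1) = N_n(t,t); equivalently, for every r in [n], the number of Dyck paths in D_n with r - 1 high peaks equals the number of Dyck paths in D_n with r peaks. -/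
attribute [local instance] Classical.propDecidable

/-- Dyck words: E = true, N = false, n steps of each kind, every prefix staying
weakly below the diagonal. -/
noncomputable def dyckWords (n : ℕ) : Finset (List Bool) :=
  ((List.replicate n true ++ List.replicate n false).permutations.toFinset).filter
    (fun s => ∀ k, (s.take k).count false ≤ (s.take k).count true)

/-- A peak is a consecutive EN pair. -/
def isPeak (s : List Bool) (i : ℕ) : Prop :=
  i + 1 < s.length ∧ s.getD i false = true ∧ s.getD (i+1) true = false

/-- A low peak is a peak touching the diagonal. -/
def isLowPeak (s : List Bool) (i : ℕ) : Prop :=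
  isPeak s i ∧ (s.take (i+1)).count true = (s.take (i+1)).count false + 1

/-- Number of peaks. -/
noncomputable def pea (s : List Bool) : ℕ :=
  ((Finset.range s.length).filter (fun i => isPeak s i)).card
/-- Number of low peaks. -/
noncomputable def lpea (s : List Bool) : ℕ :=
  ((Finset.range s.length).filter (fun i => isLowPeak s i)).card
/-- Number of high peaks. -/
noncomputable def hpea (s : List Bool) : ℕ :=
  ((Finset.range s.length).filter (fun i => isPeak s i ∧ ¬ isLowPeak s i)).card

lemma card_filter_cons (P : ℕ → Prop) [DecidablePred P] (n : ℕ) :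
    ((Finset.range (n+1)).filter P).card
      = (if P 0 then 1 else 0) + ((Finset.range n).filter (fun i => P (i+1))).card := by
  rw [Finset.card_filter, Finset.card_filter, Finset.sum_range_succ']
  exact add_comm _ _

lemma isPeak_cons_succ (x : Bool) (l : List Bool) (i : ℕ) :
    isPeak (x :: l) (i+1) ↔ isPeak l i := by
  simp [isPeak]

lemma isPeak_cons_zero (x : Bool) (l : List Bool) :
    isPeak (x :: l) 0 ↔ (x = true ∧ l.head? = some false) := by
  cases l with
  | nil => simp [isPeak]
  | cons y l' => simp [isPeak]

lemma pea_nil : pea [] = 0 := by simp [pea]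

lemma pea_cons (x : Bool) (l : List Bool) :
    pea (x :: l) = (if x = true ∧ l.head? = some false then 1 else 0) + pea l := by
  unfold pea
  rw [List.length_cons, card_filter_cons]
  have h1 : (if isPeak (x :: l) 0 then 1 else 0)
      = (if x = true ∧ l.head? = some false then 1 else 0) :=
    if_congr (isPeak_cons_zero x l) rfl rfl
  rw [h1]
  congr 1
  apply Finset.card_bij (fun i _ => i) <;> simp [isPeak_cons_succ]

/-- height step -/
def stp (x : Bool) : ℤ := if x = true then 1 else -1

def lowAux : ℤ → List Bool → ℕ
  | _, [] => 0
  | h, x :: l =>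
      (if x = true ∧ l.head? = some false ∧ h = 0 then 1 else 0) + lowAux (h + stp x) l

lemma lowAux_eq (l : List Bool) : ∀ h : ℤ,
    lowAux h l = ((Finset.range l.length).filter
      (fun i => isPeak l i ∧
        ((l.take (i+1)).count true : ℤ) + h = ((l.take (i+1)).count false : ℤ) + 1)).card := by
  induction l with
  | nil => intro h; simp [lowAux]
  | cons x l ih =>
    intro h
    rw [List.length_cons, card_filter_cons, lowAux, ih (h + stp x)]
    congr 1
    · have : (isPeak (x :: l) 0 ∧
          (((x :: l).take 1).count true : ℤ) + h = (((x :: l).take 1).count false : ℤ) + 1)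
          ↔ (x = true ∧ l.head? = some false ∧ h = 0) := by
        rw [isPeak_cons_zero]
        cases x <;> simp <;> omega
      exact if_congr this.symm rfl rfl
    · apply Finset.card_bij (fun i _ => i)
      · intro i hi
        simp only [Finset.mem_filter, Finset.mem_range] at hi ⊢
        obtain ⟨h1, h2, h3⟩ := hi
        refine ⟨h1, (isPeak_cons_succ x l i).mpr h2, ?_⟩
        simp only [List.take_succ_cons, List.count_cons]
        cases x <;> simp [stp] at h3 ⊢ <;> omega
      · intro i hi j hj hij; exact hij
      · intro i hi
        simp only [Finset.mem_filter, Finset.mem_range] at hi ⊢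
        obtain ⟨h1, h2, h3⟩ := hi
        refine ⟨i, ⟨h1, (isPeak_cons_succ x l i).mp h2, ?_⟩, rfl⟩
        simp only [List.take_succ_cons, List.count_cons] at h3
        cases x <;> simp [stp] at h3 ⊢ <;> omega

lemma lpea_eq_lowAux (l : List Bool) : lpea l = lowAux 0 l := by
  rw [lowAux_eq]
  unfold lpea
  congr 1
  apply Finset.filter_congr
  intro i _
  unfold isLowPeak
  constructor
  · rintro ⟨h1, h2⟩; exact ⟨h1, by push_cast; omega⟩
  · rintro ⟨h1, h2⟩; exact ⟨h1, by push_cast at h2; omega⟩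

lemma hpea_add_lpea (s : List Bool) : hpea s + lpea s = pea s := by
  unfold hpea lpea pea
  rw [← Finset.card_union_of_disjoint]
  · congr 1
    ext i
    simp only [Finset.mem_union, Finset.mem_filter]
    constructor
    · rintro (⟨h1, h2, _⟩ | ⟨h1, h2⟩)
      · exact ⟨h1, h2⟩
      · exact ⟨h1, h2.1⟩
    · rintro ⟨h1, h2⟩
      by_cases h : isLowPeak s i
      · exact Or.inr ⟨h1, h⟩
      · exact Or.inl ⟨h1, h2, h⟩
  · rw [Finset.disjoint_filter]
    rintro i _ ⟨_, h2⟩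
    exact h2

def bal (l : List Bool) : ℤ := (l.count true : ℤ) - (l.count false : ℤ)

lemma lowAux_nil (h : ℤ) : lowAux h [] = 0 := rfl

lemma lowAux_cons (h : ℤ) (x : Bool) (l : List Bool) : lowAux h (x :: l) =
    (if x = true ∧ l.head? = some false ∧ h = 0 then 1 else 0) + lowAux (h + stp x) l := rfl

lemma hpea_nil : hpea [] = 0 := by simp [hpea]

lemma bal_nil : bal [] = 0 := by simp [bal]

lemma bal_cons (x : Bool) (l : List Bool) : bal (x :: l) = stp x + bal l := by
  cases x <;> simp [bal, stp, List.count_cons] <;> push_cast <;> ring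

lemma pea_nil' : pea [] = 0 := by simp [pea]

lemma head?_append_of_ne_nil {u v : List Bool} (h : u ≠ []) : (u ++ v).head? = u.head? := by
  cases u with
  | nil => exact absurd rfl h
  | cons x u' => simp

lemma getLast?_cons_ne {α : Type*} (x : α) {u : List α} (h : u ≠ []) :
    (x :: u).getLast? = u.getLast? := by
  cases u with
  | nil => exact absurd rfl h
  | cons y u' => simp

lemma pea_append (u v : List Bool) :
    pea (u ++ v) = pea u + pea v
      + (if u.getLast? = some true ∧ v.head? = some false then 1 else 0) := by
  induction u with
  | nil => simp [pea_nil']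
  | cons x u' ih =>
    rw [List.cons_append, pea_cons, ih, pea_cons]
    by_cases hne : u' = []
    · subst hne; simp only [List.nil_append, pea_nil']
      cases x <;> simp [Nat.add_comm]
    · rw [head?_append_of_ne_nil hne, getLast?_cons_ne x hne]
      ring

lemma lowAux_append (u v : List Bool) : ∀ h : ℤ,
    lowAux h (u ++ v) = lowAux h u + lowAux (h + bal u) v
      + (if u.getLast? = some true ∧ v.head? = some false ∧ h + bal u = 1 then 1 else 0) := by
  induction u with
  | nil => intro h; simp [lowAux, bal_nil]
  | cons x u' ih =>
    intro h
    rw [List.cons_append, lowAux, ih (h + stp x), lowAux, bal_cons]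
    by_cases hne : u' = []
    · subst hne
      simp only [List.nil_append, lowAux, bal_nil, add_zero]
      cases x
      · have h1 : ¬ ((false : Bool) = true) := by simp
        have h2 : h + stp false = 1 ↔ h = 2 := by have : stp false = -1 := rfl; omega
        simp [h1, stp]
      · have h2 : h + stp true = 1 ↔ h = 0 := by have : stp true = 1 := rfl; omega
        by_cases hv : v.head? = some false <;> by_cases hh : h = 0 <;>
          simp only [hv, hh, h2, stp, lowAux, if_true, if_false, and_true, and_false,
            true_and, false_and, if_pos, List.getLast?_singleton] <;> simp <;> omega
    · rw [head?_append_of_ne_nil hne, getLast?_cons_ne x hne,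
        show h + stp x + bal u' = h + (stp x + bal u') by ring]
      ring

lemma lowAux_eq_zero (l : List Bool) : ∀ h : ℤ,
    (∀ k, 1 ≤ h + bal (l.take k)) → lowAux h l = 0 := by
  induction l with
  | nil => intro h _; simp [lowAux]
  | cons x l ih =>
    intro h hk
    have h0 : 1 ≤ h := by have := hk 0; simpa [bal_nil] using this
    rw [lowAux, ih (h + stp x) ?_]
    · have : ¬ (x = true ∧ l.head? = some false ∧ h = 0) := by
        rintro ⟨_, _, rfl⟩; omega
      simp [this]
    · intro k
      have := hk (k + 1)
      rw [List.take_succ_cons, bal_cons] at this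
      omega

lemma count_true_add_count_false (l : List Bool) : l.count true + l.count false = l.length := by
  induction l with
  | nil => simp
  | cons x l ih => cases x <;> simp [List.count_cons] <;> omega

lemma mem_dyckWords {n : ℕ} {s : List Bool} : s ∈ dyckWords n ↔
    s.count true = n ∧ s.count false = n ∧
      ∀ k, (s.take k).count false ≤ (s.take k).count true := by
  unfold dyckWords
  rw [Finset.mem_filter, List.mem_toFinset, List.mem_permutations, List.perm_iff_count]
  constructor
  · rintro ⟨hc, hp⟩
    have ht := hc true
    have hf := hc false
    simp [List.count_append, List.count_replicate] at ht hf
    exact ⟨ht, hf, hp⟩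
  · rintro ⟨h1, h2, hp⟩
    refine ⟨fun a => ?_, hp⟩
    cases a <;> simp [List.count_append, List.count_replicate, h1, h2]

lemma dyckWords_zero : dyckWords 0 = {[]} := by
  ext s
  rw [mem_dyckWords, Finset.mem_singleton]
  constructor
  · rintro ⟨h1, h2, _⟩
    have := count_true_add_count_false s
    rw [h1, h2] at this
    exact List.eq_nil_of_length_eq_zero (by omega)
  · rintro rfl; simp

lemma dyck_length {n : ℕ} {s : List Bool} (h : s ∈ dyckWords n) : s.length = 2 * n := by
  rw [mem_dyckWords] at h
  have := count_true_add_count_false s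
  omega

lemma dyck_nil_iff {n : ℕ} {s : List Bool} (h : s ∈ dyckWords n) : s = [] ↔ n = 0 := by
  have hl := dyck_length h
  constructor
  · rintro rfl; simp at hl; omega
  · rintro rfl; exact List.eq_nil_of_length_eq_zero (by omega)

lemma dyck_head {n : ℕ} {s : List Bool} (h : s ∈ dyckWords n) (hs : s ≠ []) :
    s.head? = some true := by
  rw [mem_dyckWords] at h
  cases s with
  | nil => exact absurd rfl hs
  | cons x l =>
    cases x
    · have := h.2.2 1
      simp at this
    · rfl

lemma dyck_getLast {n : ℕ} {s : List Bool} (h : s ∈ dyckWords n) (hs : s ≠ []) :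
    s.getLast? = some false := by
  have hl := dyck_length h
  rw [mem_dyckWords] at h
  rcases List.eq_nil_or_concat s with rfl | ⟨l, c, rfl⟩
  · exact absurd rfl hs
  · rw [List.concat_eq_append, List.getLast?_append, List.getLast?_singleton]
    cases c
    · rfl
    · exfalso
      have h2 := h.2.2 l.length
      rw [List.concat_eq_append, List.take_left] at h2
      have h3 : l.count true + 1 = n := by
        have := h.1
        simpa [List.count_append] using this
      have h4 : l.count false = n := by
        have := h.2.1
        simpa [List.count_append] using this
      omega

lemma cons_mem_dyckWords {n k : ℕ} {A B : List Bool} (hk : k ≤ n)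
    (hA : A ∈ dyckWords k) (hB : B ∈ dyckWords (n - k)) :
    (true :: A ++ false :: B) ∈ dyckWords (n+1) := by
  have hlA := dyck_length hA
  rw [mem_dyckWords] at hA hB ⊢
  obtain ⟨hA1, hA2, hA3⟩ := hA
  obtain ⟨hB1, hB2, hB3⟩ := hB
  refine ⟨?_, ?_, ?_⟩
  · simp [List.count_append, List.count_cons, hA1, hB1]; omega
  · simp [List.count_append, List.count_cons, hA2, hB2]; omega
  · intro m
    rw [List.cons_append]
    cases m with
    | zero => simp
    | succ i =>
      rw [List.take_succ_cons, List.take_append]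
      rcases Nat.eq_zero_or_eq_succ_pred (i - A.length) with hj | hj
      · rw [hj]
        simp only [List.take_zero, List.append_nil, List.count_cons]
        have := hA3 i
        simp; omega
      · have hiA : A.length ≤ i := by omega
        rw [List.take_of_length_le hiA, hj, List.take_succ_cons]
        have := hB3 (i - A.length - 1)
        simp only [List.count_cons, List.count_append]
        simp; omega

lemma decomp_len_not_lt {k k' : ℕ} {A A' B B' : List Bool}
    (hA : A ∈ dyckWords k) (hA' : A' ∈ dyckWords k')
    (h : A ++ false :: B = A' ++ false :: B') : ¬ A.length < A'.length := by
  intro hlt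
  have hlA := dyck_length hA
  rw [mem_dyckWords] at hA hA'
  have h1 : (A ++ false :: B).take (A.length + 1) = A ++ [false] := by
    rw [List.take_append, List.take_of_length_le (by omega)]
    simp
  have h2 : (A' ++ false :: B').take (A.length + 1) = A'.take (A.length + 1) := by
    rw [List.take_append, Nat.sub_eq_zero_of_le (by omega)]
    simp
  have h3 := hA'.2.2 (A.length + 1)
  rw [← h2, ← h, h1] at h3
  simp [List.count_append, hA.1, hA.2.1] at h3

lemma decomp_surj {n : ℕ} {D : List Bool} (hD : D ∈ dyckWords (n+1)) :
    ∃ k A B, k ≤ n ∧ A ∈ dyckWords k ∧ B ∈ dyckWords (n-k) ∧ D = true :: A ++ false :: B := by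
  have hlen := dyck_length hD
  rw [mem_dyckWords] at hD
  obtain ⟨hct, hcf, hp⟩ := hD
  obtain ⟨D', rfl⟩ : ∃ D', D = true :: D' := by
    cases D with
    | nil => simp at hlen
    | cons x l =>
      cases x
      · have := hp 1; simp at this
      · exact ⟨l, rfl⟩
  have hlD' : D'.length = 2 * n + 1 := by simp at hlen; omega
  have hQ : ∃ j, 1 ≤ j ∧ ((true :: D').take j).count false = ((true :: D').take j).count true := by
    refine ⟨2*(n+1), by omega, ?_⟩
    rw [List.take_of_length_le (by simp; omega)]
    omega
  obtain ⟨j, ⟨hj1, hjbal⟩, hjmin⟩ :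
      ∃ j, (1 ≤ j ∧ ((true :: D').take j).count false = ((true :: D').take j).count true) ∧
        ∀ m, m < j → ¬ (1 ≤ m ∧ ((true :: D').take m).count false
          = ((true :: D').take m).count true) :=
    ⟨Nat.find hQ, Nat.find_spec hQ, fun m hm => Nat.find_min hQ hm⟩
  have hmin : ∀ m, 1 ≤ m → m < j →
      ((true :: D').take m).count false ≠ ((true :: D').take m).count true :=
    fun m h1 h2 hc => hjmin m h2 ⟨h1, hc⟩
  have hj2 : 2 ≤ j := by
    rcases Nat.lt_or_ge j 2 with h | h
    · exfalso
      have hji : j = 1 := by omega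
      rw [hji] at hjbal
      simp at hjbal
    · exact h
  have hjle : j ≤ 2*(n+1) := by
    by_contra hcon
    refine hjmin (2*(n+1)) (by omega) ⟨by omega, ?_⟩
    rw [List.take_of_length_le (by simp; omega)]
    omega
  have hidx : j - 2 < D'.length := by omega
  obtain ⟨A, c, B, hsplit, hlA, hlcB⟩ :
      ∃ (A : List Bool) (c : Bool) (B : List Bool),
        D' = A ++ c :: B ∧ A.length = j - 2 ∧ D'.drop (j-2) = c :: B := by
    refine ⟨D'.take (j-2), D'[j-2], D'.drop (j-1), ?_, by simp [List.length_take]; omega, ?_⟩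
    · conv_lhs => rw [← List.take_append_drop (j-2) D']
      rw [List.drop_eq_getElem_cons hidx, show j - 2 + 1 = j - 1 from by omega]
    · rw [List.drop_eq_getElem_cons hidx, show j - 2 + 1 = j - 1 from by omega]
  have htkm : (true :: D').take (j-1) = true :: A := by
    rw [show j - 1 = (j-2) + 1 from by omega, List.take_succ_cons, hsplit,
      List.take_append, List.take_of_length_le (by omega),
      Nat.sub_eq_zero_of_le (by omega)]
    simp
  have htkj : (true :: D').take j = true :: (A ++ [c]) := by
    rw [show j = (j-1) + 1 from by omega, List.take_succ_cons, hsplit,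
      List.take_append, List.take_of_length_le (by omega),
      show j - 1 - A.length = 1 from by omega]
    rfl
  have hple := hp (j-1)
  have hpne := hmin (j-1) (by omega) (by omega)
  rw [htkm] at hple hpne
  simp only [List.count_cons, if_pos, if_neg] at hple hpne
  simp at hple hpne
  have hc : c = false := by
    cases hcval : c
    · rfl
    · exfalso
      rw [htkj, hcval] at hjbal
      simp [List.count_append, List.count_cons] at hjbal
      omega
  subst hc
  rw [htkj] at hjbal
  simp [List.count_append, List.count_cons] at hjbal
  have hcfA : A.count false = A.count true := by omega
  have hlA2 : 2 * A.count true = j - 2 := by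
    have := count_true_add_count_false A
    omega
  have hkn : A.count true ≤ n := by omega
  have hctD : (true :: D').count true = n + 1 := hct
  have hcfD : (true :: D').count false = n + 1 := hcf
  rw [hsplit] at hctD hcfD
  simp [List.count_cons, List.count_append] at hctD hcfD
  refine ⟨A.count true, A, B, hkn, ?_, ?_, ?_⟩
  · rw [mem_dyckWords]
    refine ⟨rfl, hcfA, ?_⟩
    intro m
    rcases Nat.lt_or_ge m (j-2) with hm | hm
    · have htm : (true :: D').take (m+1) = true :: A.take m := by
        rw [List.take_succ_cons, hsplit, List.take_append,
          Nat.sub_eq_zero_of_le (by omega)]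
        simp
      have p1 := hp (m+1)
      have p2 := hmin (m+1) (by omega) (by omega)
      rw [htm] at p1 p2
      simp [List.count_cons] at p1 p2
      omega
    · rw [List.take_of_length_le (by omega)]
      omega
  · rw [mem_dyckWords]
    refine ⟨by omega, by omega, ?_⟩
    intro m
    have hdropj : (true :: D').drop j = B := by
      rw [show j = (j-1) + 1 from by omega, List.drop_succ_cons, hsplit,
        List.drop_append, List.drop_of_length_le (by omega),
        show j - 1 - A.length = 1 from by omega]
      simp
    have p1 := hp (j + m)
    rw [List.take_add, hdropj, htkj] at p1
    simp [List.count_append, List.count_cons] at p1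
    omega
  · rw [hsplit, List.cons_append]



lemma getLast?_true_cons (A : List Bool) :
    (true :: A).getLast? = if A = [] then some true else A.getLast? := by
  cases A with
  | nil => simp
  | cons y l => simp

lemma pea_decomp {n k : ℕ} {A B : List Bool} (hA : A ∈ dyckWords k) (hB : B ∈ dyckWords (n-k)) :
    pea (true :: A ++ false :: B) = pea A + pea B + (if k = 0 then 1 else 0) := by
  rw [pea_append, pea_cons, pea_cons]
  have h1 : ¬ ((true : Bool) = true ∧ A.head? = some false) := by
    rintro ⟨-, hh⟩
    by_cases hAn : A = []
    · subst hAn; simp at hh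
    · rw [dyck_head hA hAn] at hh; simp at hh
  have h2 : ¬ ((false : Bool) = true ∧ B.head? = some false) := by simp
  rw [if_neg h1, if_neg h2]
  have h3 : ((true :: A).getLast? = some true ∧ (false :: B).head? = some false)
      ↔ (k = 0) := by
    rw [getLast?_true_cons]
    by_cases hAn : A = []
    · simp [hAn, (dyck_nil_iff hA).mp hAn]
    · rw [if_neg hAn, dyck_getLast hA hAn]
      simp [hAn]
      intro hk
      exact hAn ((dyck_nil_iff hA).mpr hk)
  rw [if_congr h3 rfl rfl]
  omega

lemma bal_dyck {k : ℕ} {A : List Bool} (hA : A ∈ dyckWords k) : bal A = 0 := by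
  rw [mem_dyckWords] at hA
  unfold bal
  rw [hA.1, hA.2.1]
  ring

lemma lpea_decomp {n k : ℕ} {A B : List Bool} (hA : A ∈ dyckWords k) (hB : B ∈ dyckWords (n-k)) :
    lpea (true :: A ++ false :: B) = lpea B + (if k = 0 then 1 else 0) := by
  rw [lpea_eq_lowAux, lpea_eq_lowAux, lowAux_append, lowAux_cons, lowAux_cons]
  have hbA : bal (true :: A) = 1 := by
    unfold bal at *
    have := bal_dyck hA
    simp only [List.count_cons] at *
    unfold bal at this
    simp at *
    omega
  have h1 : ¬ ((true : Bool) = true ∧ A.head? = some false ∧ (0:ℤ) = 0) := by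
    rintro ⟨-, hh, -⟩
    by_cases hAn : A = []
    · subst hAn; simp at hh
    · rw [dyck_head hA hAn] at hh; simp at hh
  have h2 : ¬ ((false : Bool) = true ∧ B.head? = some false ∧ (0:ℤ) + bal (true :: A) = 0) := by
    simp
  rw [if_neg h1, if_neg h2]
  have hzero : lowAux ((0:ℤ) + stp true) A = 0 := by
    apply lowAux_eq_zero
    intro m
    rw [mem_dyckWords] at hA
    have := hA.2.2 m
    unfold bal stp
    simp
    push_cast
    omega
  rw [hzero, hbA]
  have h3 : ((true :: A).getLast? = some true ∧ (false :: B).head? = some false ∧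
      (0:ℤ) + 1 = 1) ↔ (k = 0) := by
    rw [getLast?_true_cons]
    by_cases hAn : A = []
    · simp [hAn, (dyck_nil_iff hA).mp hAn]
    · rw [if_neg hAn, dyck_getLast hA hAn]
      simp [hAn]
      intro hk
      exact hAn ((dyck_nil_iff hA).mpr hk)
  rw [if_congr h3 rfl rfl]
  have : (0:ℤ) + 1 + stp false = 0 := by simp [stp]
  rw [this]
  omega

lemma hpea_decomp {n k : ℕ} {A B : List Bool} (hA : A ∈ dyckWords k) (hB : B ∈ dyckWords (n-k)) :
    hpea (true :: A ++ false :: B) = pea A + hpea B := by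
  have h1 := hpea_add_lpea (true :: A ++ false :: B)
  have h2 := hpea_add_lpea B
  have h3 := pea_decomp hA hB
  have h4 := lpea_decomp hA hB
  omega

lemma sum_decomp {M : Type*} [AddCommMonoid M] (n : ℕ) (f : List Bool → M) :
    ∑ D ∈ dyckWords (n+1), f D
      = ∑ k ∈ Finset.range (n+1), ∑ A ∈ dyckWords k, ∑ B ∈ dyckWords (n-k),
          f (true :: A ++ false :: B) := by
  have : ∀ k ∈ Finset.range (n+1), ∑ A ∈ dyckWords k, ∑ B ∈ dyckWords (n-k),
      f (true :: A ++ false :: B)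
      = ∑ p ∈ dyckWords k ×ˢ dyckWords (n-k), f (true :: p.1 ++ false :: p.2) := by
    intro k _
    rw [Finset.sum_product]
  rw [Finset.sum_congr rfl this]
  symm
  rw [Finset.sum_sigma']
  apply Finset.sum_bij (fun x _ => true :: x.2.1 ++ false :: x.2.2)
  · rintro ⟨k, A, B⟩ hx
    simp only [Finset.mem_sigma, Finset.mem_range, Finset.mem_product] at hx
    exact cons_mem_dyckWords (by omega) hx.2.1 hx.2.2
  · rintro ⟨k, A, B⟩ hx ⟨k', A', B'⟩ hy heq
    simp only [Finset.mem_sigma, Finset.mem_range, Finset.mem_product] at hx hy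
    simp only [List.cons_append, List.cons.injEq, true_and] at heq
    have hlen : A.length = A'.length := by
      by_contra hne
      rcases Nat.lt_or_ge A.length A'.length with h | h
      · exact decomp_len_not_lt hx.2.1 hy.2.1 heq h
      · exact decomp_len_not_lt hy.2.1 hx.2.1 heq.symm (by omega)
    obtain ⟨hAA, hBB⟩ := List.append_inj heq hlen
    simp only [List.cons.injEq, true_and] at hBB
    have hk : k = k' := by
      have h1 := (mem_dyckWords.mp hx.2.1).1
      have h2 := (mem_dyckWords.mp hy.2.1).1
      rw [← h1, ← h2, hAA]
    subst hk; subst hAA; subst hBB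
    rfl
  · intro D hD
    obtain ⟨k, A, B, hk, hA, hB, hEq⟩ := decomp_surj hD
    refine ⟨⟨k, A, B⟩, ?_, hEq.symm⟩
    simp only [Finset.mem_sigma, Finset.mem_range, Finset.mem_product]
    exact ⟨by omega, hA, hB⟩
  · rintro ⟨k, A, B⟩ hx
    rfl

noncomputable def dpP (n : ℕ) : Polynomial ℚ := ∑ D ∈ dyckWords n, Polynomial.X ^ pea D
noncomputable def dpH (n : ℕ) : Polynomial ℚ := ∑ D ∈ dyckWords n, Polynomial.X ^ hpea D
noncomputable def dpQ (k : ℕ) : Polynomial ℚ := if k = 0 then Polynomial.X else dpP k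

lemma dpP_zero : dpP 0 = 1 := by simp [dpP, dyckWords_zero, pea_nil]
lemma dpH_zero : dpH 0 = 1 := by simp [dpH, dyckWords_zero, hpea_nil]

lemma dpP_succ (n : ℕ) :
    dpP (n+1) = ∑ k ∈ Finset.range (n+1), dpQ k * dpP (n-k) := by
  rw [dpP, sum_decomp]
  apply Finset.sum_congr rfl
  intro k hk
  have : ∀ A ∈ dyckWords k, ∀ B ∈ dyckWords (n-k),
      (Polynomial.X : Polynomial ℚ) ^ pea (true :: A ++ false :: B)
        = Polynomial.X ^ (pea A + (if k = 0 then 1 else 0)) * Polynomial.X ^ pea B := by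
    intro A hA B hB
    rw [pea_decomp hA hB, ← pow_add]
    congr 1
    omega
  calc ∑ A ∈ dyckWords k, ∑ B ∈ dyckWords (n-k),
        (Polynomial.X : Polynomial ℚ) ^ pea (true :: A ++ false :: B)
      = ∑ A ∈ dyckWords k, ∑ B ∈ dyckWords (n-k),
          Polynomial.X ^ (pea A + (if k = 0 then 1 else 0)) * Polynomial.X ^ pea B := by
        apply Finset.sum_congr rfl
        intro A hA
        exact Finset.sum_congr rfl (fun B hB => this A hA B hB)
    _ = (∑ A ∈ dyckWords k, Polynomial.X ^ (pea A + (if k = 0 then 1 else 0)))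
          * ∑ B ∈ dyckWords (n-k), Polynomial.X ^ pea B := by
        simp only [Finset.sum_mul, Finset.mul_sum]
        rw [Finset.sum_comm]
    _ = dpQ k * dpP (n-k) := by
        rw [dpP]
        by_cases hk0 : k = 0
        · subst hk0
          simp [dyckWords_zero, pea_nil, dpQ]
        · simp only [hk0, if_false, dpQ, dpP, add_zero]

lemma dpH_succ (n : ℕ) :
    Polynomial.X * dpH (n+1)
      = ∑ k ∈ Finset.range (n+1), dpP k * (Polynomial.X * dpH (n-k)) := by
  rw [dpH, sum_decomp, Finset.mul_sum]
  apply Finset.sum_congr rfl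
  intro k hk
  calc Polynomial.X * ∑ A ∈ dyckWords k, ∑ B ∈ dyckWords (n-k),
        (Polynomial.X : Polynomial ℚ) ^ hpea (true :: A ++ false :: B)
      = ∑ A ∈ dyckWords k, ∑ B ∈ dyckWords (n-k),
          (Polynomial.X : Polynomial ℚ) ^ pea A * (Polynomial.X * Polynomial.X ^ hpea B) := by
        rw [Finset.mul_sum]
        apply Finset.sum_congr rfl
        intro A hA
        rw [Finset.mul_sum]
        apply Finset.sum_congr rfl
        intro B hB
        rw [hpea_decomp hA hB, pow_add]
        ring
    _ = dpP k * (Polynomial.X * dpH (n-k)) := by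
        simp only [dpP, dpH, Finset.sum_mul, Finset.mul_sum]
        rw [Finset.sum_comm]

lemma dp_main : ∀ n : ℕ, 1 ≤ n → Polynomial.X * dpH n = dpP n := by
  intro n
  induction n using Nat.strong_induction_on with
  | _ n ih =>
    intro hn
    obtain ⟨m, rfl⟩ : ∃ m, n = m + 1 := ⟨n - 1, by omega⟩
    rw [dpH_succ, dpP_succ]
    have hQ : ∀ j, j ≤ m → Polynomial.X * dpH j = dpQ j := by
      intro j hj
      by_cases hj0 : j = 0
      · subst hj0
        rw [dpH_zero, dpQ]
        simp
      · rw [ih j (by omega) (by omega), dpQ, if_neg hj0]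
    have h1 : ∀ k ∈ Finset.range (m+1), dpP k * (Polynomial.X * dpH (m-k))
        = dpP k * dpQ (m-k) := by
      intro k hk
      rw [hQ (m-k) (by omega)]
    rw [Finset.sum_congr rfl h1]
    rw [← Finset.sum_range_reflect]
    apply Finset.sum_congr rfl
    intro k hk
    simp only [Finset.mem_range] at hk
    simp only [Nat.add_sub_cancel]
    rw [show m - (m - k) = k from by omega]
    ring

/-- t · N_n(t,1) = N_n(t,t): the number of Dyck paths with r - 1 high peaks equals
the number with r peaks, for every r ∈ [n]. -/
theorem hpea_pea_shift (n : ℕ) (hn : 1 ≤ n) :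
    (Polynomial.X * ∑ D ∈ dyckWords n, (Polynomial.X : Polynomial ℚ) ^ hpea D
        = ∑ D ∈ dyckWords n, (Polynomial.X : Polynomial ℚ) ^ pea D)
    ∧ ∀ r, 1 ≤ r → r ≤ n →
      ((dyckWords n).filter (fun D => hpea D = r - 1)).card
        = ((dyckWords n).filter (fun D => pea D = r)).card := by
  have hmain : Polynomial.X * dpH n = dpP n := dp_main n hn
  constructor
  · exact hmain
  · intro r hr1 hrn
    have hco := congrArg (fun p => Polynomial.coeff p r) hmain
    simp only [dpP, dpH] at hco
    rw [show r = (r - 1) + 1 from by omega, Polynomial.coeff_X_mul] at hco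
    rw [Polynomial.finset_sum_coeff, Polynomial.finset_sum_coeff] at hco
    simp only [Polynomial.coeff_X_pow] at hco
    rw [Finset.sum_boole, Finset.sum_boole] at hco
    have hcard : ((dyckWords n).filter (fun D => r - 1 = hpea D)).card
        = ((dyckWords n).filter (fun D => (r-1)+1 = pea D)).card := by
      exact_mod_cast hco
    rw [show (r-1)+1 = r from by omega] at hcard
    have e1 : (dyckWords n).filter (fun D => r - 1 = hpea D)
        = (dyckWords n).filter (fun D => hpea D = r - 1) := by
      apply Finset.filter_congr
      intro D _
      exact eq_comm
    have e2 : (dyckWords n).filter (fun D => r = pea D)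
        = (dyckWords n).filter (fun D => pea D = r) := by
      apply Finset.filter_congr
      intro D _
      exact eq_comm
    rw [e1, e2] at hcard
    exact hcard
end

section
/- Reversal on nonnesting permutations satisfies des(π^R) = 2n - 1 - wdes(π) and plat(π^R) = plat(π), and consequently C_n(t,u) = t^{2n-1} · C_n(1/t, u/t). -/
attribute [local instance] Classical.propDecidable

lemma pairs_concat (s : List ℕ) (b a : ℕ) :
    ((s ++ [b]) ++ [a]).zip (((s ++ [b]) ++ [a]).tail)
      = (s ++ [b]).zip ((s ++ [b]).tail) ++ [(b, a)] := by
  induction s with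
  | nil => rfl
  | cons c s ih =>
    rcases s with _ | ⟨d, s⟩
    · rfl
    · simpa using ih

lemma pairs_reverse (l : List ℕ) :
    l.reverse.zip l.reverse.tail = ((l.zip l.tail).map Prod.swap).reverse := by
  induction l with
  | nil => rfl
  | cons a l ih =>
    rcases l with _ | ⟨b, t⟩
    · rfl
    · have h1 : (a :: b :: t).reverse = (t.reverse ++ [b]) ++ [a] := by simp
      rw [h1, pairs_concat]
      have h2 : (b :: t).reverse = t.reverse ++ [b] := by simp
      rw [← h2, ih]
      simp

lemma filter_not_length (l : List (ℕ × ℕ)) (p : ℕ × ℕ → Bool) :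
    (l.filter p).length + (l.filter (fun x => !(p x))).length = l.length := by
  induction l with
  | nil => rfl
  | cons a l ih => by_cases h : p a <;> simp [List.filter_cons, h, ← ih] <;> omega

lemma des_reverse_add (w : List ℕ) : des w.reverse + wdes w = w.length - 1 := by
  have hplen : (w.zip w.tail).length = w.length - 1 := by
    rw [List.length_zip, List.length_tail]
    exact Nat.min_eq_right (Nat.sub_le _ _)
  have : des w.reverse
      = ((w.zip w.tail).filter (fun p => !(decide (p.2 ≤ p.1)))).length := by
    unfold des
    rw [pairs_reverse, List.filter_reverse, List.length_reverse, List.filter_map,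
      List.length_map]
    congr 1
    apply List.filter_congr
    intro p _
    simp only [Function.comp_apply, Prod.snd_swap, Prod.fst_swap, Bool.not_eq_true',
      ← decide_not, decide_eq_decide]
    omega
  rw [this, wdes, Nat.add_comm, filter_not_length, hplen]

lemma plat_reverse (w : List ℕ) : plat w.reverse = plat w := by
  unfold plat
  rw [pairs_reverse, List.filter_reverse, List.length_reverse, List.filter_map,
    List.length_map]
  congr 1
  apply List.filter_congr
  intro p _
  simp [Prod.swap, Function.comp, eq_comm]

lemma length_baseWord (n : ℕ) : (baseWord n 2).length = 2 * n := by
  induction n with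
  | zero => rfl
  | succ m ih =>
    rw [baseWord, List.range_succ, List.flatMap_append] at *
    simp_all [baseWord]
    omega

lemma mem_nonnest_length {n : ℕ} {w : List ℕ} (hw : w ∈ nonnest n) : w.length = 2 * n := by
  have h := (Finset.mem_filter.mp hw).1
  rw [multiPerms, List.mem_toFinset, List.mem_permutations] at h
  rw [h.length_eq, length_baseWord]

lemma getD_reverse (w : List ℕ) (i : ℕ) (h : i < w.length) :
    w.reverse.getD i 0 = w.getD (w.length - 1 - i) 0 := by
  rw [List.getD_eq_getElem _ _ (by simpa using h),
    List.getD_eq_getElem _ _ (by omega : w.length - 1 - i < w.length)]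
  simp

lemma reverse_mem_nonnest {n : ℕ} {w : List ℕ} (hw : w ∈ nonnest n) :
    w.reverse ∈ nonnest n := by
  rw [nonnest, Finset.mem_filter] at hw ⊢
  obtain ⟨h1, h2⟩ := hw
  constructor
  · rw [multiPerms, List.mem_toFinset, List.mem_permutations] at h1 ⊢
    exact (w.reverse_perm).trans h1
  · intro i j l m hij hjl hlm hm hval1 hval2
    rw [List.length_reverse] at hm
    set L := w.length with hL
    rw [getD_reverse w i (by omega), getD_reverse w j (by omega),
      getD_reverse w l (by omega), getD_reverse w m (by omega)] at *
    have key := h2 (L - 1 - m) (L - 1 - l) (L - 1 - j) (L - 1 - i)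
      (by omega) (by omega) (by omega) (by omega) hval1.symm hval2.symm
    rw [hval1, hval2, key]

/-- Reversal of nonnesting permutations: des(π^R) = 2n - 1 - wdes(π) and
plat(π^R) = plat(π); consequently C_n(t,u) = t^{2n-1} C_n(1/t, u/t). -/
theorem reversal_nonnest (n : ℕ) :
    (∀ π ∈ nonnest n, des π.reverse = 2 * n - 1 - wdes π ∧ plat π.reverse = plat π)
    ∧ (∑ π ∈ nonnest n,
          (MvPolynomial.X 0 : MvPolynomial (Fin 2) ℚ) ^ des π * (MvPolynomial.X 1) ^ plat π)
        = ∑ π ∈ nonnest n,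
            (MvPolynomial.X 0 : MvPolynomial (Fin 2) ℚ) ^ (2 * n - 1 - wdes π)
              * (MvPolynomial.X 1) ^ plat π := by
  constructor
  · intro π hπ
    have h1 := des_reverse_add π
    rw [mem_nonnest_length hπ] at h1
    exact ⟨by omega, plat_reverse π⟩
  · refine Finset.sum_bij' (fun π _ => π.reverse) (fun π _ => π.reverse)
      (fun π hπ => reverse_mem_nonnest hπ) (fun π hπ => reverse_mem_nonnest hπ)
      (fun π _ => π.reverse_reverse) (fun π _ => π.reverse_reverse) ?_
    intro π hπ
    have h1 := des_reverse_add π.reverse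
    rw [List.reverse_reverse, List.length_reverse, mem_nonnest_length hπ] at h1
    rw [plat_reverse]
    congr 1
    congr 1
    omega
end

section
/- For k ≥ 3 and n ≥ 1, the set A_n^k of permutations of the multiset with k copies of each element of [n] that avoid 1221 and 2112 has joint descent–plateau generating polynomial u^{(k-3)n+2}·(u^2 + t)^{n-1}·A_n(t); in particular |A_n^k| = 2^{n-1}·n!. -/
attribute [local instance] Classical.propDecidable

/-- Permutations of the multiset with k copies of each element of [n] avoiding
1221 and 2112. -/
noncomputable def Ank (n k : ℕ) : Finset (List ℕ) := (multiPerms n k).filter avoids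

-- Section A : des / plat recursions
lemma des_nil : des [] = 0 := rfl
lemma des_single (a : ℕ) : des [a] = 0 := rfl
lemma des_cons_cons (a b : ℕ) (l : List ℕ) :
    des (a :: b :: l) = (if b < a then 1 else 0) + des (b :: l) := by
  simp [des, List.zip, List.filter]
  split <;> simp_all <;> omega
lemma plat_cons_cons (a b : ℕ) (l : List ℕ) :
    plat (a :: b :: l) = (if b = a then 1 else 0) + plat (b :: l) := by
  simp [plat, List.zip, List.filter]
  split <;> simp_all <;> omega

lemma exists_cons_of_replicate_append (m a : ℕ) (l : List ℕ) :
    ∃ t, List.replicate m a ++ (a :: l) = a :: t := by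
  cases m with
  | zero => exact ⟨l, rfl⟩
  | succ m => exact ⟨List.replicate m a ++ (a :: l), by simp [List.replicate_succ]⟩

lemma des_replicate_append (m a : ℕ) (l : List ℕ) :
    des (List.replicate m a ++ (a :: l)) = des (a :: l) := by
  induction m with
  | zero => simp
  | succ m ih =>
    obtain ⟨t, ht⟩ := exists_cons_of_replicate_append m a l
    rw [List.replicate_succ, List.cons_append, ht, des_cons_cons, ← ht, ih]
    simp

lemma plat_replicate_append (m a : ℕ) (l : List ℕ) :
    plat (List.replicate m a ++ (a :: l)) = m + plat (a :: l) := by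
  induction m with
  | zero => simp
  | succ m ih =>
    obtain ⟨t, ht⟩ := exists_cons_of_replicate_append m a l
    rw [List.replicate_succ, List.cons_append, ht, plat_cons_cons, ← ht, ih]
    simp
    omega

-- Section B : avoids ↔ no abba sublist
def A4 (w : List ℕ) : Prop := ∀ a b : ℕ, a ≠ b → ¬ ([a,b,b,a].Sublist w)

lemma avoids_iff (w : List ℕ) : avoids w ↔ A4 w := by
  constructor
  · intro h a b hab hs
    rw [List.sublist_iff_exists_fin_orderEmbedding_get_eq] at hs
    obtain ⟨f, hf⟩ := hs
    have l01 : (f ⟨0, by norm_num⟩ : ℕ) < (f ⟨1, by norm_num⟩ : ℕ) :=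
      f.strictMono (Fin.mk_lt_mk.mpr (by norm_num))
    have l12 : (f ⟨1, by norm_num⟩ : ℕ) < (f ⟨2, by norm_num⟩ : ℕ) :=
      f.strictMono (Fin.mk_lt_mk.mpr (by norm_num))
    have l23 : (f ⟨2, by norm_num⟩ : ℕ) < (f ⟨3, by norm_num⟩ : ℕ) :=
      f.strictMono (Fin.mk_lt_mk.mpr (by norm_num))
    have h3 : (f ⟨3, by norm_num⟩ : ℕ) < w.length := (f ⟨3, by norm_num⟩).isLt
    have e0 := hf ⟨0, by norm_num⟩
    have e1 := hf ⟨1, by norm_num⟩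
    have e2 := hf ⟨2, by norm_num⟩
    have e3 := hf ⟨3, by norm_num⟩
    simp only [List.get_eq_getElem] at e0 e1 e2 e3
    simp only [List.getElem_cons_zero, List.getElem_cons_succ] at e0 e1 e2 e3
    have := h (f ⟨0, by norm_num⟩) (f ⟨1, by norm_num⟩) (f ⟨2, by norm_num⟩) (f ⟨3, by norm_num⟩)
      l01 l12 l23 h3 ?_ ?_
    · apply hab
      have h0 : (f ⟨0, by norm_num⟩ : ℕ) < w.length := by omega
      have h1 : (f ⟨1, by norm_num⟩ : ℕ) < w.length := by omega
      rw [List.getD_eq_getElem w 0 h0, List.getD_eq_getElem w 0 h1, ← e0, ← e1] at this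
      exact this
    · have h0 : (f ⟨0, by norm_num⟩ : ℕ) < w.length := by omega
      rw [List.getD_eq_getElem w 0 h0, List.getD_eq_getElem w 0 h3, ← e0, ← e3]
    · have h1 : (f ⟨1, by norm_num⟩ : ℕ) < w.length := by omega
      have h2 : (f ⟨2, by norm_num⟩ : ℕ) < w.length := by omega
      rw [List.getD_eq_getElem w 0 h1, List.getD_eq_getElem w 0 h2, ← e1, ← e2]
  · intro h i j l m hij hjl hlm hm him hjl'
    by_contra hne
    have hi : i < w.length := by omega
    have hj : j < w.length := by omega
    have hl : l < w.length := by omega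
    have hsub : [w.getD i 0, w.getD j 0, w.getD j 0, w.getD i 0].Sublist w := by
      rw [List.sublist_iff_exists_fin_orderEmbedding_get_eq]
      refine ⟨OrderEmbedding.ofStrictMono
        (fun t => (⟨if (t : ℕ) = 0 then i else if (t : ℕ) = 1 then j
          else if (t : ℕ) = 2 then l else m, by
            rcases t with ⟨tv, htv⟩
            simp only [List.length_cons, List.length_nil] at htv
            interval_cases tv <;> simp <;> omega⟩ : Fin w.length)) ?_, ?_⟩
      · rintro ⟨sv, hsv⟩ ⟨tv, htv⟩ hst
        simp only [List.length_cons, List.length_nil] at hsv htv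
        simp only [Fin.lt_def, Fin.mk_lt_mk] at hst ⊢
        interval_cases sv <;> interval_cases tv <;> simp <;> omega
      · rintro ⟨tv, htv⟩
        simp only [List.length_cons, List.length_nil] at htv
        have him2 : w[i] = w[m] := by
          rw [List.getD_eq_getElem w 0 hi, List.getD_eq_getElem w 0 hm] at him; exact him
        have hjl2 : w[j] = w[l] := by
          rw [List.getD_eq_getElem w 0 hj, List.getD_eq_getElem w 0 hl] at hjl'; exact hjl'
        interval_cases tv <;>
          (simp only [List.get_eq_getElem, OrderEmbedding.coe_ofStrictMono, Fin.val_mk]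
           norm_num [List.getD_eq_getElem w 0 hi, List.getD_eq_getElem w 0 hj, him2, hjl2,
             List.getElem?_eq_getElem hi, List.getElem?_eq_getElem hj,
             List.getElem?_eq_getElem hl, List.getElem?_eq_getElem hm])
    exact h _ _ hne hsub

-- Section C : the encoding
def enc (k : ℕ) : ℕ → List ℕ → List Bool → List ℕ
  | _, [], _ => []
  | m, [a], _ => List.replicate m a
  | m, a :: b :: rest, [] => List.replicate m a ++ enc k k (b :: rest) []
  | m, a :: b :: rest, s :: ss =>
      if s then List.replicate (m-1) a ++ b :: a :: enc k (k-1) (b :: rest) ss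
      else List.replicate m a ++ enc k k (b :: rest) ss
  termination_by m σ s => σ.length

lemma replicate_append_cons (q a : ℕ) (X : List ℕ) :
    List.replicate q a ++ a :: X = List.replicate (q+1) a ++ X := by
  simp [List.replicate_succ', List.append_assoc]

lemma enc_single (k m a : ℕ) (s : List Bool) : enc k m [a] s = List.replicate m a := by
  cases s <;> simp [enc]

lemma enc_nilbits (k m a b : ℕ) (rest : List ℕ) :
    enc k m (a :: b :: rest) [] = List.replicate m a ++ enc k k (b :: rest) [] := by
  simp [enc]

lemma enc_false (k m a b : ℕ) (rest : List ℕ) (ss : List Bool) :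
    enc k m (a :: b :: rest) (false :: ss) = List.replicate m a ++ enc k k (b :: rest) ss := by
  simp [enc]

lemma enc_true (k m a b : ℕ) (rest : List ℕ) (ss : List Bool) :
    enc k m (a :: b :: rest) (true :: ss)
      = List.replicate (m - 1) a ++ b :: a :: enc k (k - 1) (b :: rest) ss := by
  simp [enc]

lemma enc_cons (k m : ℕ) (a : ℕ) (τ : List ℕ) (s : List Bool) (hm : 2 ≤ m) :
    enc k m (a :: τ) s = a :: enc k (m - 1) (a :: τ) s := by
  match τ, s with
  | [], s => rw [enc_single, enc_single, ← List.replicate_succ]; congr 1; omega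
  | b :: rest, [] =>
      rw [enc_nilbits, enc_nilbits, ← List.cons_append, ← List.replicate_succ]
      congr 2; omega
  | b :: rest, true :: ss =>
      rw [enc_true, enc_true, ← List.cons_append, ← List.replicate_succ]
      congr 2; omega
  | b :: rest, false :: ss =>
      rw [enc_false, enc_false, ← List.cons_append, ← List.replicate_succ]
      congr 2; omega

lemma enc_perm (k : ℕ) (hk : 3 ≤ k) : ∀ (σ : List ℕ) (s : List Bool) (m : ℕ), 1 ≤ m →
    (enc k m σ s).Perm (List.replicate (m - k) 0 ++ σ.flatMap (fun x => List.replicate k x)) →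
    True := fun _ _ _ _ _ => trivial

lemma enc_perm' (k : ℕ) (hk : 3 ≤ k) : ∀ (σ : List ℕ) (s : List Bool) (m a : ℕ), 1 ≤ m →
    (enc k m (a :: σ) s).Perm
      (List.replicate m a ++ σ.flatMap (fun x => List.replicate k x)) := by
  intro σ
  induction σ with
  | nil => intro s m a _; rw [enc_single]; simp
  | cons b rest ih =>
    intro s m a hm
    match s with
    | [] =>
        rw [enc_nilbits]
        refine List.Perm.append_left _ ?_
        have := ih [] k b (by omega)
        simpa using this
    | false :: ss =>
        rw [enc_false]
        refine List.Perm.append_left _ ?_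
        have := ih ss k b (by omega)
        simpa using this
    | true :: ss =>
        rw [enc_true]
        have hE := ih ss (k-1) b (by omega)
        have h1 : (b :: a :: enc k (k-1) (b :: rest) ss).Perm
            (a :: b :: enc k (k-1) (b :: rest) ss) := List.Perm.swap _ _ _
        have h2 : (List.replicate (m-1) a ++ b :: a :: enc k (k-1) (b :: rest) ss).Perm
            (List.replicate (m-1) a ++ a :: b :: enc k (k-1) (b :: rest) ss) :=
          List.Perm.append_left _ h1
        refine h2.trans ?_
        have heq : List.replicate (m-1) a ++ a :: b :: enc k (k-1) (b :: rest) ss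
            = List.replicate m a ++ b :: enc k (k-1) (b :: rest) ss := by
          rw [replicate_append_cons, show m - 1 + 1 = m from by omega]
        rw [heq]
        refine List.Perm.append_left _ ?_
        have : (b :: enc k (k-1) (b::rest) ss).Perm
            (b :: (List.replicate (k-1) b ++ rest.flatMap (fun x => List.replicate k x))) :=
          List.Perm.cons _ hE
        refine this.trans ?_
        rw [show (b :: (List.replicate (k-1) b ++ rest.flatMap (fun x => List.replicate k x)))
          = List.replicate k b ++ rest.flatMap (fun x => List.replicate k x) from by
            rw [← List.cons_append, ← List.replicate_succ]
            congr 2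
            omega]
        simp

lemma enc_length (k : ℕ) (hk : 3 ≤ k) (σ : List ℕ) (s : List Bool) (m a : ℕ) (hm : 1 ≤ m) :
    (enc k m (a :: σ) s).length = m + k * σ.length := by
  have := (enc_perm' k hk σ s m a hm).length_eq
  rw [this]
  have hs : ∀ τ : List ℕ, (τ.flatMap (fun x => List.replicate k x)).length = k * τ.length := by
    intro τ
    induction τ with
    | nil => simp
    | cons c t iht => simp [iht]; ring
  simp [hs]

lemma mem_enc (k : ℕ) : ∀ (σ : List ℕ) (s : List Bool) (m x : ℕ),
    x ∈ enc k m σ s → x ∈ σ := by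
  intro σ
  induction σ with
  | nil => intro s m x h; cases s <;> simp [enc] at h
  | cons a τ ih =>
    intro s m x h
    match τ, s with
    | [], s => rw [enc_single] at h; simp at h; simp [h]
    | b :: rest, [] =>
        rw [enc_nilbits] at h
        rcases List.mem_append.mp h with h | h
        · simp at h; simp [h.2]
        · have := ih [] k x h; simp at this ⊢; tauto
    | b :: rest, false :: ss =>
        rw [enc_false] at h
        rcases List.mem_append.mp h with h | h
        · simp at h; simp [h.2]
        · have := ih ss k x h; simp at this ⊢; tauto
    | b :: rest, true :: ss =>
        rw [enc_true] at h
        rcases List.mem_append.mp h with h | h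
        · simp at h; simp [h.2]
        · simp at h
          rcases h with h | h | h
          · simp [h]
          · simp [h]
          · have := ih ss (k-1) x h; simp at this ⊢; tauto

-- des/plat of encoded words
lemma des_replicate_append' (m a : ℕ) (l : List ℕ) (hm : 1 ≤ m) :
    des (List.replicate m a ++ l) = des (a :: l) := by
  have : List.replicate m a ++ l = List.replicate (m-1) a ++ (a :: l) := by
    rw [replicate_append_cons, show m - 1 + 1 = m from by omega]
  rw [this, des_replicate_append]

lemma plat_replicate_append' (m a : ℕ) (l : List ℕ) (hm : 1 ≤ m) :
    plat (List.replicate m a ++ l) = (m - 1) + plat (a :: l) := by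
  have : List.replicate m a ++ l = List.replicate (m-1) a ++ (a :: l) := by
    rw [replicate_append_cons, show m - 1 + 1 = m from by omega]
  rw [this, plat_replicate_append]

lemma enc_des (k : ℕ) (hk : 3 ≤ k) : ∀ (σ : List ℕ) (s : List Bool) (m : ℕ), 2 ≤ m → m ≤ k →
    σ.Nodup → s.length + 1 = σ.length →
    des (enc k m σ s) = des σ + s.count true := by
  intro σ
  induction σ with
  | nil => intro s m _ _ _ hlen; simp at hlen
  | cons a τ ih =>
    intro s m hm hmk hnd hlen
    match τ, s with
    | [], [] =>
        rw [enc_single]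
        have : List.replicate m a = List.replicate (m-1) a ++ (a :: ([] : List ℕ)) := by
          rw [replicate_append_cons, show m-1+1 = m from by omega]; simp
        rw [this, des_replicate_append]; simp [des_single, des_nil]
    | b :: rest, false :: ss =>
        have hab : a ≠ b := by simp at hnd; tauto
        rw [enc_false, des_replicate_append' _ _ _ (by omega),
          enc_cons k k b rest ss (by omega), des_cons_cons,
          ← enc_cons k k b rest ss (by omega),
          ih ss k (by omega) (le_refl k) (by simp_all) (by simp_all),
          des_cons_cons]
        simp
        omega
    | b :: rest, true :: ss =>
        have hab : a ≠ b := by simp at hnd; tauto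
        have hE := enc_cons k (k-1) b rest ss (by omega)
        rw [enc_true, des_replicate_append' _ _ _ (by omega), hE, des_cons_cons, des_cons_cons,
          des_cons_cons, ← hE,
          ih ss (k-1) (by omega) (by omega) (by simp_all) (by simp_all), des_cons_cons]
        have h1 : (if b < a then 1 else 0) + (if a < b then 1 else 0) = 1 := by
          rcases lt_or_gt_of_ne hab with h | h <;> simp [h] <;> omega
        simp only [List.count_cons, List.count_nil]
        norm_num
        omega
    | [], s :: ss => simp at hlen
    | b :: rest, [] => simp at hlen

lemma enc_plat (k : ℕ) (hk : 3 ≤ k) : ∀ (σ : List ℕ) (s : List Bool) (m : ℕ), 2 ≤ m → m ≤ k →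
    σ.Nodup → s.length + 1 = σ.length →
    plat (enc k m σ s) + 2 * s.count true = (m - 1) + (k - 1) * s.length := by
  intro σ
  induction σ with
  | nil => intro s m _ _ _ hlen; simp at hlen
  | cons a τ ih =>
    intro s m hm hmk hnd hlen
    match τ, s with
    | [], [] =>
        rw [enc_single]
        have : List.replicate m a = List.replicate (m-1) a ++ (a :: ([] : List ℕ)) := by
          rw [replicate_append_cons, show m-1+1 = m from by omega]; simp
        rw [this, plat_replicate_append]; simp [plat]
    | b :: rest, false :: ss =>
        have hab : b ≠ a := by simp at hnd; tauto
        have hrec := ih ss k (by omega) (le_refl k) (by simp_all) (by simp_all)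
        rw [enc_false, plat_replicate_append' _ _ _ (by omega),
          enc_cons k k b rest ss (by omega), plat_cons_cons, ← enc_cons k k b rest ss (by omega)]
        simp only [if_neg hab, List.count_cons, List.count_nil]
        simp only [List.length_cons]
        have hk1 : (k - 1) * (ss.length + 1) = (k-1) + (k-1) * ss.length := by ring
        norm_num
        omega
    | b :: rest, true :: ss =>
        have hab : b ≠ a := by simp at hnd; tauto
        have hab' : a ≠ b := fun h => hab h.symm
        have hrec := ih ss (k-1) (by omega) (by omega) (by simp_all) (by simp_all)
        have hE := enc_cons k (k-1) b rest ss (by omega)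
        rw [enc_true, plat_replicate_append' _ _ _ (by omega), hE, plat_cons_cons, plat_cons_cons,
          plat_cons_cons, ← hE]
        simp only [if_neg hab, if_neg hab', List.count_cons, List.count_nil]
        simp only [List.length_cons]
        have hk1 : (k - 1) * (ss.length + 1) = (k-1) + (k-1) * ss.length := by ring
        norm_num
        omega

-- avoidance of encoded words
lemma A4_of_sublist {v w : List ℕ} (h : v.Sublist w) (hw : A4 w) : A4 v :=
  fun a b hab hs => hw a b hab (hs.trans h)

lemma A4_replicate_append {a m : ℕ} {E : List ℕ} (hE : A4 E) (ha : a ∉ E) :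
    A4 (List.replicate m a ++ E) := by
  intro x y hxy hs
  rw [List.sublist_append_iff] at hs
  obtain ⟨s1, s2, heq, h1, h2⟩ := hs
  have h1a : ∀ z ∈ s1, z = a := fun z hz => List.eq_of_mem_replicate (h1.subset hz)
  match s1, heq with
  | [], heq => exact hE x y hxy (heq ▸ h2)
  | [z], heq =>
      simp at heq
      obtain ⟨hz, hs2⟩ := heq
      have hxa : x = a := hz.trans (h1a z (by simp))
      apply ha
      have : x ∈ s2 := by rw [← hs2]; simp
      exact hxa ▸ h2.subset this
  | z1 :: z2 :: s1', heq =>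
      apply hxy
      have e1 : z1 = x := by simpa using congrArg (fun l => l.getD 0 0) heq.symm
      have e2 : z2 = y := by simpa using congrArg (fun l => l.getD 1 0) heq.symm
      rw [← e1, ← e2, h1a z1 (by simp), h1a z2 (by simp)]

lemma A4_swap {a b m : ℕ} {E : List ℕ} (hE : A4 (b :: E)) (haE : a ∉ E) (hab : a ≠ b)
    (hm : 1 ≤ m) : A4 (List.replicate m a ++ b :: a :: E) := by
  intro x y hxy hs
  rw [show List.replicate m a ++ b :: a :: E = List.replicate m a ++ ([b] ++ ([a] ++ E)) from by
    simp] at hs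
  rw [List.sublist_append_iff] at hs
  obtain ⟨s1, s234, heq, h1, hs234⟩ := hs
  rw [List.sublist_append_iff] at hs234
  obtain ⟨s2, s34, heq2, h2, hs34⟩ := hs234
  rw [List.sublist_append_iff] at hs34
  obtain ⟨s3, s4, heq3, h3, h4⟩ := hs34
  subst heq2 heq3
  have h1a : ∀ z ∈ s1, z = a := fun z hz => List.eq_of_mem_replicate (h1.subset hz)
  have h4a : a ∉ s4 := fun hz => haE (h4.subset hz)
  match s1, heq with
  | z1 :: z2 :: s1', heq =>
      exact hxy (by rw [show x = z1 from by simpa using congrArg (fun l => l.getD 0 0) heq,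
        show y = z2 from by simpa using congrArg (fun l => l.getD 1 0) heq,
        h1a z1 (by simp), h1a z2 (by simp)])
  | [], heq =>
    rcases List.sublist_singleton.mp h2 with h2e | h2e <;> subst h2e <;>
      rcases List.sublist_singleton.mp h3 with h3e | h3e <;> subst h3e
    · -- s2=[], s3=[]
      simp only [List.nil_append] at heq
      have hsub : ([x,y,y,x] : List ℕ).Sublist E := by rw [heq]; exact h4
      exact hE x y hxy (hsub.trans (List.sublist_cons_self b E))
    · -- s2=[], s3=[a]
      simp only [List.nil_append, List.singleton_append] at heq
      have hxa : x = a := by simpa using congrArg (fun l => l.getD 0 0) heq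
      have hs4 : s4 = [y, y, x] := by simpa using (congrArg List.tail heq).symm
      exact h4a (by rw [hs4]; simp [hxa])
    · -- s2=[b], s3=[]
      simp only [List.nil_append, List.singleton_append] at heq
      have hxb : x = b := by simpa using congrArg (fun l => l.getD 0 0) heq
      have hs4 : s4 = [y, y, x] := by simpa using (congrArg List.tail heq).symm
      have hsub : ([x, y, y, x] : List ℕ).Sublist (b :: E) := by
        rw [hxb]
        have h5 : ([y, y, x] : List ℕ).Sublist E := by rw [← hs4]; exact h4
        rw [hxb] at h5
        exact h5.cons₂ b
      exact hE x y hxy hsub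
    · -- s2=[b], s3=[a]
      simp only [List.nil_append, List.singleton_append] at heq
      have hya : y = a := by simpa using congrArg (fun l => l.getD 1 0) heq
      have hs4 : s4 = [y, x] := by simpa using (congrArg (fun l => l.drop 2) heq).symm
      exact h4a (by rw [hs4]; simp [hya])
  | [z], heq =>
    have hza : z = a := h1a z (by simp)
    rcases List.sublist_singleton.mp h2 with h2e | h2e <;> subst h2e <;>
      rcases List.sublist_singleton.mp h3 with h3e | h3e <;> subst h3e
    · -- s2=[], s3=[]
      simp only [List.singleton_append, List.nil_append] at heq
      have hxa : x = a := (by simpa using congrArg (fun l => l.getD 0 0) heq : x = z).trans hza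
      have hs4 : s4 = [y, y, x] := by simpa using (congrArg List.tail heq).symm
      exact h4a (by rw [hs4]; simp [hxa])
    · -- s2=[], s3=[a]
      simp only [List.singleton_append, List.nil_append] at heq
      have hxa : x = a := (by simpa using congrArg (fun l => l.getD 0 0) heq : x = z).trans hza
      have hya : y = a := by simpa using congrArg (fun l => l.getD 1 0) heq
      exact hxy (hxa.trans hya.symm)
    · -- s2=[b], s3=[]
      simp only [List.singleton_append, List.nil_append] at heq
      have hxa : x = a := (by simpa using congrArg (fun l => l.getD 0 0) heq : x = z).trans hza
      have hs4 : s4 = [y, x] := by simpa using (congrArg (fun l => l.drop 2) heq).symm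
      exact h4a (by rw [hs4]; simp [hxa])
    · -- s2=[b], s3=[a]
      simp only [List.singleton_append, List.nil_append] at heq
      have hyb : y = b := by simpa using congrArg (fun l => l.getD 1 0) heq
      have hya : y = a := by simpa using congrArg (fun l => l.getD 2 0) heq
      exact hab (hya.symm.trans hyb)

lemma not_mem_enc (k : ℕ) (σ : List ℕ) (s : List Bool) (m x : ℕ) (hx : x ∉ σ) :
    x ∉ enc k m σ s := fun h => hx (mem_enc k σ s m x h)

lemma enc_avoids (k : ℕ) (hk : 3 ≤ k) : ∀ (σ : List ℕ) (s : List Bool) (m : ℕ), 2 ≤ m →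
    σ.Nodup → A4 (enc k m σ s) := by
  intro σ
  induction σ with
  | nil => intro s m _ _; cases s <;> simp [enc] <;> intro x y _ h <;>
      exact absurd (List.sublist_nil.mp h) (by simp)
  | cons a τ ih =>
    intro s m hm hnd
    have haτ : a ∉ τ := by simp at hnd; tauto
    match τ, s with
    | [], s =>
        rw [enc_single]
        intro x y hxy hs
        have hx : x = a := List.eq_of_mem_replicate (hs.subset (by simp))
        have hy : y = a := List.eq_of_mem_replicate (hs.subset (by simp))
        exact hxy (hx.trans hy.symm)
    | b :: rest, [] =>
        rw [enc_nilbits]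
        exact A4_replicate_append (ih [] k (by omega) (by simp_all))
          (not_mem_enc k _ _ _ _ haτ)
    | b :: rest, false :: ss =>
        rw [enc_false]
        exact A4_replicate_append (ih ss k (by omega) (by simp_all))
          (not_mem_enc k _ _ _ _ haτ)
    | b :: rest, true :: ss =>
        rw [enc_true]
        have hcons := enc_cons k k b rest ss (by omega)
        have hA : A4 (b :: enc k (k - 1) (b :: rest) ss) := by
          rw [← hcons]; exact ih ss k (by omega) (by simp_all)
        refine A4_swap hA ?_ (by simp at haτ; tauto) (by omega)
        exact not_mem_enc k _ _ _ _ haτ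

lemma enc_inj (k : ℕ) (hk : 3 ≤ k) : ∀ (σ σ' : List ℕ) (s s' : List Bool) (m : ℕ),
    2 ≤ m → m ≤ k → σ.Nodup → σ'.Nodup → s.length + 1 = σ.length → s'.length + 1 = σ'.length →
    enc k m σ s = enc k m σ' s' → σ = σ' ∧ s = s' := by
  intro σ
  induction σ with
  | nil => intro σ' s s' m _ _ _ _ hlen _ _; simp at hlen
  | cons a τ ih =>
    intro σ' s s' m hm hmk hnd hnd' hlen hlen' heq
    match σ' with
    | [] => simp at hlen'
    | a' :: τ' =>
      -- heads agree
      have hhead : a = a' := by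
        have h1 := enc_cons k m a τ s hm
        have h2 := enc_cons k m a' τ' s' hm
        rw [h1, h2] at heq
        exact (List.cons_eq_cons.mp heq).1
      subst hhead
      -- lengths agree
      have hlen2 : τ.length = τ'.length := by
        have := enc_length k hk τ s m a (by omega)
        have h2 := enc_length k hk τ' s' m a (by omega)
        rw [heq] at this
        rw [this] at h2
        have hk0 : 0 < k := by omega
        exact Nat.eq_of_mul_eq_mul_left hk0 (by omega)
      match τ, τ', s, s' with
      | [], [], [], [] => exact ⟨rfl, rfl⟩
      | [], b' :: rest', _, _ => simp at hlen2
      | b :: rest, [], _, _ => simp at hlen2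
      | b :: rest, b' :: rest', bit :: ss, bit' :: ss' =>
        -- compare the element at position m-1 to show bit = bit'
        have hab : a ≠ b := by simp at hnd; tauto
        have hab' : a ≠ b' := by simp at hnd'; tauto
        have hbit : bit = bit' := by
          by_contra hne
          have key : ∀ (c : ℕ) (ρ : List ℕ) (tt : List Bool),
              a ≠ c → (enc k m (a :: c :: ρ) (true :: tt))[m-1]? = some c := by
            intro c ρ tt hac
            rw [enc_true]
            rw [List.getElem?_append_right (by simp)]
            simp
          have key2 : ∀ (c : ℕ) (ρ : List ℕ) (tt : List Bool),
              (enc k m (a :: c :: ρ) (false :: tt))[m-1]? = some a := by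
            intro c ρ tt
            rw [enc_false]
            rw [List.getElem?_append_left (by simpa using (by omega : m - 1 < m))]
            simp only [List.getElem?_replicate, if_pos (by omega : m - 1 < m)]
          match bit, bit', hne with
          | false, false, hne => exact hne rfl
          | true, true, hne => exact hne rfl
          | false, true, _ =>
            have e1 := key2 b rest ss
            rw [heq, key b' rest' ss' hab'] at e1
            exact hab' (by simpa using e1.symm)
          | true, false, _ =>
            have e1 := key b rest ss hab
            rw [heq, key2 b' rest' ss'] at e1
            exact hab (by simpa using e1)
        subst hbit
        cases bit
        · rw [enc_false, enc_false] at heq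
          have heq2 : enc k k (b :: rest) ss = enc k k (b' :: rest') ss' :=
            List.append_cancel_left heq
          have := ih (b' :: rest') ss ss' k (by omega) (le_refl k) (by simp_all)
            (by simp_all) (by simp_all) (by simp_all) heq2
          exact ⟨by rw [this.1], by rw [this.2]⟩
        · rw [enc_true, enc_true] at heq
          have heq2 : b :: a :: enc k (k-1) (b :: rest) ss
              = b' :: a :: enc k (k-1) (b' :: rest') ss' := List.append_cancel_left heq
          have hbb : b = b' := (List.cons_eq_cons.mp heq2).1
          subst hbb
          have heq3 : enc k (k-1) (b :: rest) ss = enc k (k-1) (b :: rest') ss' := by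
            have := (List.cons_eq_cons.mp heq2).2
            exact (List.cons_eq_cons.mp this).2
          have := ih (b :: rest') ss ss' (k-1) (by omega) (by omega) (by simp_all)
            (by simp_all) (by simp_all) (by simp_all) heq3
          exact ⟨by rw [this.1], by rw [this.2]⟩

-- Section D : completeness
lemma exists_last_split {a : ℕ} {w : List ℕ} (h : a ∈ w) :
    ∃ u v, w = u ++ a :: v ∧ a ∉ v := by
  induction w with
  | nil => simp at h
  | cons c t ih =>
    by_cases hat : a ∈ t
    · obtain ⟨u, v, rfl, hv⟩ := ih hat
      exact ⟨c :: u, v, rfl, hv⟩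
    · have hac : a = c := by rcases List.mem_cons.mp h with h | h; exact h; exact absurd h hat
      exact ⟨[], t, by simp [hac], hat⟩

lemma mem_mem_sublist {b c : ℕ} {u : List ℕ} (hb : b ∈ u) (hc : c ∈ u) (hbc : b ≠ c) :
    ([b, c] : List ℕ).Sublist u ∨ ([c, b] : List ℕ).Sublist u := by
  induction u with
  | nil => simp at hb
  | cons d t ih =>
    by_cases hbd : b = d
    · subst hbd
      have hct : c ∈ t := by
        rcases List.mem_cons.mp hc with h | h
        · exact absurd h.symm hbc
        · exact h
      exact Or.inl ((List.singleton_sublist.mpr hct).cons₂ b)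
    · by_cases hcd : c = d
      · subst hcd
        have hbt : b ∈ t := by
          rcases List.mem_cons.mp hb with h | h; exact absurd h hbd; exact h
        exact Or.inr ((List.singleton_sublist.mpr hbt).cons₂ c)
      · have hbt : b ∈ t := by rcases List.mem_cons.mp hb with h | h; exact absurd h hbd; exact h
        have hct : c ∈ t := by rcases List.mem_cons.mp hc with h | h; exact absurd h hcd; exact h
        rcases ih hbt hct with h | h
        · exact Or.inl (h.trans (List.sublist_cons_self d t))
        · exact Or.inr (h.trans (List.sublist_cons_self d t))

lemma one_two {b c : ℕ} {v : List ℕ} (hbc : b ≠ c) (hb : 1 ≤ v.count b) (hc : 2 ≤ v.count c) :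
    ([b, c] : List ℕ).Sublist v ∨ ([c, c, b] : List ℕ).Sublist v := by
  induction v with
  | nil => simp at hb
  | cons d t ih =>
    rw [List.count_cons] at hb hc
    simp only [beq_iff_eq] at hb hc
    by_cases hbd : b = d
    · subst hbd
      rw [if_neg hbc] at hc
      have hct : c ∈ t := List.count_pos_iff.mp (by omega)
      exact Or.inl ((List.singleton_sublist.mpr hct).cons₂ b)
    · by_cases hcd : c = d
      · subst hcd
        rw [if_neg (Ne.symm hbc)] at hb
        rw [if_pos rfl] at hc
        have hbt : b ∈ t := List.count_pos_iff.mp (by omega)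
        have hct : c ∈ t := List.count_pos_iff.mp (by omega)
        rcases mem_mem_sublist hbt hct hbc with h | h
        · exact Or.inl (h.trans (List.sublist_cons_self c t))
        · exact Or.inr (h.cons₂ c)
      · rw [if_neg (fun h => hbd h.symm)] at hb
        rw [if_neg (fun h => hcd h.symm)] at hc
        rcases ih hb hc with h | h
        · exact Or.inl (h.trans (List.sublist_cons_self d t))
        · exact Or.inr (h.trans (List.sublist_cons_self d t))

lemma two_two {b c : ℕ} {v : List ℕ} (hbc : b ≠ c) (hb : 2 ≤ v.count b) (hc : 2 ≤ v.count c) :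
    ([b, b, c] : List ℕ).Sublist v ∨ ([c, c, b] : List ℕ).Sublist v := by
  induction v with
  | nil => simp at hb
  | cons d t ih =>
    rw [List.count_cons] at hb hc
    simp only [beq_iff_eq] at hb hc
    by_cases hbd : b = d
    · subst hbd
      rw [if_pos rfl] at hb
      rw [if_neg hbc] at hc
      rcases one_two hbc (by omega : 1 ≤ t.count b) hc with h | h
      · exact Or.inl (h.cons₂ b)
      · exact Or.inr (h.trans (List.sublist_cons_self b t))
    · by_cases hcd : c = d
      · subst hcd
        rw [if_pos rfl] at hc
        rw [if_neg (Ne.symm hbc)] at hb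
        rcases one_two (Ne.symm hbc) (by omega : 1 ≤ t.count c) hb with h | h
        · exact Or.inr (h.cons₂ c)
        · exact Or.inl (h.trans (List.sublist_cons_self c t))
      · rw [if_neg (fun h => hbd h.symm)] at hb
        rw [if_neg (fun h => hcd h.symm)] at hc
        rcases ih hb hc with h | h
        · exact Or.inl (h.trans (List.sublist_cons_self d t))
        · exact Or.inr (h.trans (List.sublist_cons_self d t))

lemma complete (k : ℕ) (hk : 3 ≤ k) :
    ∀ N (vals w : List ℕ), vals.length = N → vals ≠ [] → vals.Nodup →
    (∀ x, w.count x = if x ∈ vals then k else 0) → A4 w →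
    ∃ σ s, σ.Perm vals ∧ σ.Nodup ∧ s.length + 1 = σ.length ∧ w = enc k k σ s := by
  intro N
  induction N using Nat.strong_induction_on with
  | _ N ih =>
  intro vals w hN hne hnd hcount hA
  obtain ⟨x0, hx0⟩ := List.exists_mem_of_ne_nil vals hne
  have hx0w : x0 ∈ w := List.count_pos_iff.mp (by rw [hcount x0, if_pos hx0]; omega)
  cases w with
  | nil => simp at hx0w
  | cons a t =>
  have haw : a ∈ a :: t := by simp
  have hav : a ∈ vals := by
    by_contra hno
    have := hcount a
    rw [if_neg hno] at this
    exact (List.count_eq_zero.mp this) haw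
  have hcnt_a : (a :: t).count a = k := by rw [hcount a, if_pos hav]
  obtain ⟨u, v, hw, hanv⟩ := exists_last_split haw
  have hcau : u.count a + 1 = k := by
    have h0 := hcnt_a
    rw [hw, List.count_append, List.count_cons] at h0
    simp [List.count_eq_zero.mpr hanv] at h0
    omega
  have hune : u ≠ [] := by intro h; rw [h] at hcau; simp at hcau; omega
  obtain ⟨c, u₁, rfl⟩ : ∃ c u₁, u = c :: u₁ := by
    cases u with
    | nil => exact absurd rfl hune
    | cons c u₁ => exact ⟨c, u₁, rfl⟩
  have hca : c = a := by
    have h0 : a :: t = c :: (u₁ ++ a :: v) := by rw [hw]; rfl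
    exact ((List.cons_eq_cons.mp h0).1).symm
  subst hca
  -- Step 1
  have step1 : ∀ b, b ≠ c → (c :: u₁).count b ≤ 1 := by
    intro b hba
    by_contra hgt
    have h2 : 2 ≤ u₁.count b := by
      have hcb : ¬ c = b := fun h => hba h.symm
      have h3 : (c :: u₁).count b = u₁.count b := by
        rw [List.count_cons]; simp [hcb]
      omega
    have hbb : ([b, b] : List ℕ).Sublist u₁ := by
      have := List.replicate_sublist_iff.mpr h2
      simpa using this
    have habba : ([c, b, b, c] : List ℕ).Sublist (c :: t) := by
      rw [hw]
      have h1 : ([c, b, b] : List ℕ).Sublist (c :: u₁) := hbb.cons₂ c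
      have h2' : ([c] : List ℕ).Sublist (c :: v) := List.singleton_sublist.mpr (by simp)
      exact h1.append h2'
    exact hA c b (Ne.symm hba) habba
  by_cases hex : ∃ b, b ∈ (c :: u₁) ∧ b ≠ c
  case neg =>
    -- all of u is c
    have hall : ∀ z ∈ c :: u₁, z = c := by
      intro z hz
      by_contra hzc
      exact hex ⟨z, hz, hzc⟩
    have hlenu : (c :: u₁).length + 1 = k := by
      have : (c :: u₁).count c = (c :: u₁).length := List.count_eq_length.mpr
        (fun b hb => (hall b hb).symm)
      omega
    have hurep : c :: u₁ = List.replicate ((c :: u₁).length) c := List.eq_replicate_of_mem hall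
    have hw2 : c :: t = List.replicate k c ++ v := by
      rw [hw, hurep, replicate_append_cons, hlenu]
    have hvcount : ∀ x, v.count x = if x ∈ vals.erase c then k else 0 := by
      intro x
      by_cases hxc : x = c
      · subst hxc
        rw [List.count_eq_zero.mpr hanv, if_neg (hnd.not_mem_erase)]
      · have hxu : (c :: u₁).count x = 0 := List.count_eq_zero.mpr
          (fun hmem => hxc (hall x hmem))
        have h0 : (c :: u₁).count x + (c :: v).count x = (if x ∈ vals then k else 0) := by
          rw [← List.count_append, ← hw]; exact hcount x
        rw [hxu, List.count_cons] at h0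
        have hcx : ¬ c = x := fun h => hxc h.symm
        simp [hcx] at h0
        simp only [List.mem_erase_of_ne hxc]
        omega
    by_cases hvals1 : vals.erase c = []
    · -- vals = [c], v = []
      have hvnil : v = [] := by
        rw [List.eq_nil_iff_forall_not_mem]
        intro x hx
        have := hvcount x
        rw [hvals1] at this
        simp at this
        exact absurd (List.count_pos_iff.mpr hx) (by omega)
      have hvals : vals = [c] := by
        have hlen1 : vals.length = 1 := by
          have h5 := List.length_erase_of_mem hav
          rw [hvals1] at h5
          simp at h5
          have hpos : 0 < vals.length := List.length_pos_of_mem hav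
          omega
        obtain ⟨y, hy⟩ := List.length_eq_one_iff.mp hlen1
        rw [hy] at hav
        simp at hav
        rw [hy, hav]
      refine ⟨[c], [], by rw [hvals], by simp, by simp, ?_⟩
      rw [enc_single, hw2, hvnil]
      simp
    · -- recurse
      have hNpos : 1 ≤ N := by
        rw [← hN]
        cases vals
        · exact absurd rfl hne
        · simp
      have herlen : (vals.erase c).length = N - 1 := by
        rw [List.length_erase_of_mem hav, hN]
      obtain ⟨σ', s', hperm, hnd', hlen', henc⟩ := ih (N - 1) (by omega) (vals.erase c) v
        herlen hvals1 (hnd.erase c) hvcount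
        (A4_of_sublist (by rw [hw2]; exact List.sublist_append_right _ v) hA)
      obtain ⟨b, rest, rfl⟩ : ∃ b rest, σ' = b :: rest := by
        cases σ' with
        | nil => exact absurd (hperm.nil_eq.symm) hvals1
        | cons b rest => exact ⟨b, rest, rfl⟩
      have hcns : c ∉ b :: rest := fun hmem => hnd.not_mem_erase (hperm.subset hmem)
      refine ⟨c :: b :: rest, false :: s', ?_, ?_, by simp [← hlen'], ?_⟩
      · exact (hperm.cons c).trans (List.perm_cons_erase hav).symm
      · exact List.nodup_cons.mpr ⟨hcns, hnd'⟩
      · rw [enc_false, ← henc, hw2]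
  case pos =>
    obtain ⟨b, hbu, hbc⟩ := hex
    have hbw : b ∈ c :: t := by rw [hw]; exact List.mem_append.mpr (Or.inl hbu)
    have hbvals : b ∈ vals := by
      by_contra hno
      have := hcount b
      rw [if_neg hno] at this
      exact (List.count_eq_zero.mp this) hbw
    have hcbu : (c :: u₁).count b = 1 :=
      le_antisymm (step1 b hbc) (List.count_pos_iff.mpr hbu)
    have hcbv : v.count b + 2 = k + 1 := by
      have h0 : (c :: u₁).count b + (c :: v).count b = (if b ∈ vals then k else 0) := by
        rw [← List.count_append, ← hw]; exact hcount b
      rw [hcbu, List.count_cons, if_pos hbvals] at h0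
      have hcb : ¬ c = b := fun h => hbc h.symm
      simp [hcb] at h0
      omega
    -- step 2 : everything in u is c or b
    have step2 : ∀ z ∈ c :: u₁, z = c ∨ z = b := by
      intro z hz
      by_contra hcon
      push_neg at hcon
      obtain ⟨hzc, hzb⟩ := hcon
      have hczv : v.count z + 2 = k + 1 := by
        have h0 := hcount z
        have hzvals : z ∈ vals := by
          by_contra hno
          rw [if_neg hno] at h0
          exact (List.count_eq_zero.mp h0) (by rw [hw]; exact List.mem_append.mpr (Or.inl hz))
        have hczu : (c :: u₁).count z = 1 :=
          le_antisymm (step1 z hzc) (List.count_pos_iff.mpr hz)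
        have h1 : (c :: u₁).count z + (c :: v).count z = (if z ∈ vals then k else 0) := by
          rw [← List.count_append, ← hw]; exact hcount z
        rw [hczu, List.count_cons, if_pos hzvals] at h1
        have hcz : ¬ c = z := fun h => hzc h.symm
        simp [hcz] at h1
        omega
      have hbz : b ≠ z := fun h => hzb h.symm
      rcases two_two hbz (by omega : 2 ≤ v.count b) (by omega : 2 ≤ v.count z) with hh | hh
      · -- [z,b,b,z] <+ w
        have hzu : ([z] : List ℕ).Sublist (c :: u₁) := List.singleton_sublist.mpr hz
        have h2 : ([b, b, z] : List ℕ).Sublist (c :: v) := hh.trans (List.sublist_cons_self c v)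
        exact hA z b hzb (by rw [hw]; exact hzu.append h2)
      · have hbu' : ([b] : List ℕ).Sublist (c :: u₁) := List.singleton_sublist.mpr hbu
        have h2 : ([z, z, b] : List ℕ).Sublist (c :: v) := hh.trans (List.sublist_cons_self c v)
        exact hA b z hbz (by rw [hw]; exact hbu'.append h2)
    -- split u at last b
    obtain ⟨p, q, hu, hbq⟩ := exists_last_split hbu
    have hq : q = [] := by
      cases q with
      | nil => rfl
      | cons d q' =>
        exfalso
        have hd : d ∈ c :: u₁ := by rw [hu]; simp
        have hdb : d ≠ b := by
          intro h
          exact hbq (by rw [← h]; simp)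
        have hdc : d = c := by
          rcases step2 d hd with h | h
          · exact h
          · exact absurd h hdb
        have h1 : ([b, c] : List ℕ).Sublist (c :: u₁) := by
          rw [hu]
          have hx : ([c] : List ℕ).Sublist (d :: q') := List.singleton_sublist.mpr (by simp [hdc])
          exact (hx.cons₂ b).trans (List.sublist_append_right p _)
        have h3 : ([c, b] : List ℕ).Sublist (c :: v) := by
          have hbv : b ∈ v := List.count_pos_iff.mp (by omega)
          exact (List.singleton_sublist.mpr hbv).cons₂ c
        exact hA b c hbc (by rw [hw]; exact h1.append h3)
    subst hq
    have hbp : b ∉ p := by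
      intro hmem
      have h1 := List.count_pos_iff.mpr hmem
      have h2 : 2 ≤ (c :: u₁).count b := by
        rw [hu, List.count_append]
        have h3 : List.count b [b] = 1 := by simp
        omega
      omega
    have hpa : ∀ z ∈ p, z = c := by
      intro z hz
      rcases step2 z (by rw [hu]; exact List.mem_append.mpr (Or.inl hz)) with h | h
      · exact h
      · exact absurd (h ▸ hz) hbp
    have hprep : p = List.replicate p.length c := List.eq_replicate_of_mem hpa
    have hplen : p.length + 2 = k + 1 := by
      have : (c :: u₁).count c = p.length := by
        rw [hu, List.count_append, hprep]
        simp [List.count_replicate, List.count_cons, hbc, show ¬ c = b from fun h => hbc h.symm]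
      omega
    have hw3 : c :: t = List.replicate (k - 1) c ++ b :: c :: v := by
      rw [hw, hu, hprep]
      rw [show p.length = k - 1 from by omega]
      simp
    -- recurse on b :: v
    have hvcount : ∀ x, (b :: v).count x = if x ∈ vals.erase c then k else 0 := by
      intro x
      by_cases hxc : x = c
      · subst hxc
        rw [List.count_cons, List.count_eq_zero.mpr hanv, if_neg (hnd.not_mem_erase)]
        simp [hbc]
      · simp only [List.mem_erase_of_ne hxc]
        rw [List.count_cons]
        by_cases hxb : x = b
        · subst hxb
          rw [if_pos hbvals]
          simp only [beq_self_eq_true, if_true]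
          omega
        · have hxu : (c :: u₁).count x = 0 := List.count_eq_zero.mpr (fun hmem => by
            rcases step2 x hmem with h | h
            · exact hxc h
            · exact hxb h)
          have h0 : (c :: u₁).count x + (c :: v).count x = (if x ∈ vals then k else 0) := by
            rw [← List.count_append, ← hw]; exact hcount x
          rw [hxu, List.count_cons] at h0
          have hcx : ¬ c = x := fun h => hxc h.symm
          have hbx : ¬ b = x := fun h => hxb h.symm
          simp [hcx, hbx] at h0 ⊢
          omega
    have hsubbv : (b :: v).Sublist (c :: t) := by
      rw [hw3]
      exact ((List.sublist_cons_self c v).cons₂ b).trans (List.sublist_append_right _ _)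
    have hvals1 : vals.erase c ≠ [] := by
      intro h
      have : b ∈ vals.erase c := (List.mem_erase_of_ne hbc).mpr hbvals
      rw [h] at this
      simp at this
    have hNpos : 1 ≤ N := by
      rw [← hN]; cases vals; exact absurd rfl hne; simp
    have herlen : (vals.erase c).length = N - 1 := by
      rw [List.length_erase_of_mem hav, hN]
    obtain ⟨σ', s', hperm, hnd', hlen', henc⟩ := ih (N - 1) (by omega) (vals.erase c) (b :: v)
      herlen hvals1 (hnd.erase c) hvcount (A4_of_sublist hsubbv hA)
    obtain ⟨b', rest, rfl⟩ : ∃ b' rest, σ' = b' :: rest := by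
      cases σ' with
      | nil => exact absurd (hperm.nil_eq.symm) hvals1
      | cons b' rest => exact ⟨b', rest, rfl⟩
    have hcons := enc_cons k k b' rest s' (by omega)
    rw [hcons] at henc
    have hbb' : b' = b := ((List.cons_eq_cons.mp henc).1).symm
    subst hbb'
    have hvenc : v = enc k (k - 1) (b' :: rest) s' := (List.cons_eq_cons.mp henc).2
    have hcns : c ∉ b' :: rest := fun hmem => hnd.not_mem_erase (hperm.subset hmem)
    refine ⟨c :: b' :: rest, true :: s', ?_, ?_, by simp [← hlen'], ?_⟩
    · exact (hperm.cons c).trans (List.perm_cons_erase hav).symm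
    · exact List.nodup_cons.mpr ⟨hcns, hnd'⟩
    · rw [enc_true, ← hvenc, hw3]

-- Section E : assembly
def valsList (n : ℕ) : List ℕ := (List.range n).map (· + 1)

lemma valsList_nodup (n : ℕ) : (valsList n).Nodup :=
  (List.nodup_range (n := n)).map (fun a b h => by omega)

lemma valsList_length (n : ℕ) : (valsList n).length = n := by simp [valsList]

lemma baseWord_eq (n k : ℕ) : baseWord n k = (valsList n).flatMap (fun x => List.replicate k x) := by
  unfold baseWord valsList
  induction (List.range n) with
  | nil => simp
  | cons a t iht => simp_all

lemma baseWord_one (n : ℕ) : baseWord n 1 = valsList n := by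
  rw [baseWord_eq]
  induction (valsList n) with
  | nil => simp
  | cons a t iht => simp_all

lemma count_flatMap_replicate (k x : ℕ) : ∀ (vals : List ℕ), vals.Nodup →
    (vals.flatMap (fun v => List.replicate k v)).count x = if x ∈ vals then k else 0 := by
  intro vals
  induction vals with
  | nil => simp
  | cons a t iht =>
    intro hnd
    rw [List.flatMap_cons, List.count_append, List.count_replicate,
      iht (List.nodup_cons.mp hnd).2]
    simp only [beq_iff_eq]
    by_cases hxa : x = a
    · subst hxa
      rw [if_pos rfl, if_neg (by exact fun h => (List.nodup_cons.mp hnd).1 h), if_pos (by simp)]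
      simp
    · rw [if_neg (fun h => hxa h.symm)]
      by_cases hxt : x ∈ t
      · rw [if_pos hxt, if_pos (by simp [hxt])]
        simp
      · rw [if_neg hxt, if_neg (by simp [hxa, hxt])]

lemma mem_multiPerms (n k : ℕ) (w : List ℕ) :
    w ∈ multiPerms n k ↔ ∀ x, w.count x = if x ∈ valsList n then k else 0 := by
  rw [multiPerms, List.mem_toFinset, List.mem_permutations, List.perm_iff_count]
  constructor
  · intro h x
    rw [h x, baseWord_eq, count_flatMap_replicate k x _ (valsList_nodup n)]
  · intro h x
    rw [h x, baseWord_eq, count_flatMap_replicate k x _ (valsList_nodup n)]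

lemma ofFn_cast_get (l : List Bool) (m : ℕ) (h : m = l.length) :
    List.ofFn (fun i : Fin m => l.get (Fin.cast h i)) = l := by
  subst h
  exact List.ofFn_get l

lemma prod_ite_pow (X Y : MvPolynomial (Fin 2) ℚ) : ∀ (m : ℕ) (f : Fin m → Bool),
    (∏ i, (if f i then X else Y))
      = X ^ ((List.ofFn f).count true) * Y ^ (m - (List.ofFn f).count true) := by
  intro m
  induction m with
  | zero => intro f; simp
  | succ m ihm =>
    intro f
    have hle : (List.ofFn (fun i : Fin m => f i.succ)).count true ≤ m := by
      have h1 := List.count_le_length (l := List.ofFn fun i : Fin m => f i.succ) (a := true)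
      simpa using h1
    rw [Fin.prod_univ_succ, List.ofFn_succ, ihm]
    cases hf : f 0
    · rw [if_neg (by simp [hf])]
      have hc : (false :: List.ofFn fun i : Fin m => f i.succ).count true
          = (List.ofFn fun i : Fin m => f i.succ).count true := by simp
      rw [hc]
      set W := (List.ofFn fun i : Fin m => f i.succ).count true
      rw [show m + 1 - W = (m - W) + 1 from by omega, pow_succ]
      ring
    · rw [if_pos (by simp [hf])]
      have hc : (true :: List.ofFn fun i : Fin m => f i.succ).count true
          = (List.ofFn fun i : Fin m => f i.succ).count true + 1 := by simp
      rw [hc]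
      set W := (List.ofFn fun i : Fin m => f i.succ).count true
      rw [show m + 1 - (W + 1) = m - W from by omega, pow_succ]
      ring

lemma sum_fun_bool_prod (m : ℕ) (g : Bool → MvPolynomial (Fin 2) ℚ) :
    (∑ f : Fin m → Bool, ∏ i, g (f i)) = (g false + g true) ^ m := by
  rw [← Fintype.prod_sum (fun _ j => g j)]
  rw [show (∑ b, g b) = g false + g true from by simp [Fintype.sum_bool]; ring]
  simp

/-- For k ≥ 3 and n ≥ 1, the joint descent-plateau polynomial of A_n^k equals
u^{(k-3)n+2} (u^2 + t)^{n-1} A_n(t); in particular |A_n^k| = 2^{n-1} n!. -/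
theorem Ank_generating_polynomial (n k : ℕ) (hk : 3 ≤ k) (hn : 1 ≤ n) :
    (∑ π ∈ Ank n k,
        (MvPolynomial.X 0 : MvPolynomial (Fin 2) ℚ) ^ des π * (MvPolynomial.X 1) ^ plat π)
      = (MvPolynomial.X 1) ^ ((k - 3) * n + 2) * ((MvPolynomial.X 1) ^ 2 + MvPolynomial.X 0) ^ (n - 1)
          * (∑ σ ∈ multiPerms n 1, (MvPolynomial.X 0 : MvPolynomial (Fin 2) ℚ) ^ des σ)
    ∧ (Ank n k).card = 2 ^ (n - 1) * n.factorial := by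
  classical
  have hσ : ∀ σ ∈ multiPerms n 1, σ.Perm (valsList n) := by
    intro σ h
    rw [multiPerms, List.mem_toFinset, List.mem_permutations, baseWord_one] at h
    exact h
  have hσnd : ∀ σ ∈ multiPerms n 1, σ.Nodup :=
    fun σ h => ((hσ σ h).nodup_iff).mpr (valsList_nodup n)
  have hσlen : ∀ σ ∈ multiPerms n 1, σ.length = n :=
    fun σ h => by rw [(hσ σ h).length_eq, valsList_length]
  have himg : Ank n k = Finset.image
      (fun p : List ℕ × (Fin (n-1) → Bool) => enc k k p.1 (List.ofFn p.2))
      ((multiPerms n 1) ×ˢ (Finset.univ : Finset (Fin (n-1) → Bool))) := by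
    ext w
    rw [Ank, Finset.mem_filter, Finset.mem_image]
    constructor
    · rintro ⟨hmp, hav⟩
      have hA : A4 w := (avoids_iff w).mp hav
      have hc := (mem_multiPerms n k w).mp hmp
      obtain ⟨σ, s, hperm, hnd, hlen, henc⟩ := complete k hk n (valsList n) w (valsList_length n)
        (by intro h0; have h1 := valsList_length n; rw [h0] at h1; simp at h1; omega)
        (valsList_nodup n) hc hA
      have hσmem : σ ∈ multiPerms n 1 := by
        rw [multiPerms, List.mem_toFinset, List.mem_permutations, baseWord_one]
        exact hperm
      have hslen : n - 1 = s.length := by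
        have h2 := hperm.length_eq
        rw [valsList_length] at h2
        omega
      refine ⟨(σ, fun i => s.get (Fin.cast hslen i)),
        Finset.mem_product.mpr ⟨hσmem, Finset.mem_univ _⟩, ?_⟩
      show enc k k σ (List.ofFn _) = w
      rw [ofFn_cast_get s (n-1) hslen, henc]
    · rintro ⟨⟨σ, f⟩, hmem, rfl⟩
      have hσmem := (Finset.mem_product.mp hmem).1
      have hnd := hσnd σ hσmem
      have hlen := hσlen σ hσmem
      obtain ⟨a, τ, rfl⟩ : ∃ a τ, σ = a :: τ := by
        cases σ with
        | nil => exfalso; simp at hlen; omega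
        | cons a τ => exact ⟨a, τ, rfl⟩
      constructor
      · rw [mem_multiPerms]
        intro x
        have hp1 : (enc k k (a :: τ) (List.ofFn f)).Perm
            ((a :: τ).flatMap (fun x => List.replicate k x)) := by
          rw [List.flatMap_cons]
          exact enc_perm' k hk τ (List.ofFn f) k a (by omega)
        have hp2 : ((a :: τ).flatMap fun x => List.replicate k x).Perm
            ((valsList n).flatMap fun x => List.replicate k x) :=
          (hσ _ hσmem).flatMap_right _
        rw [(hp1.trans hp2).count_eq x, count_flatMap_replicate k x _ (valsList_nodup n)]
      · exact (avoids_iff _).mpr (enc_avoids k hk (a :: τ) (List.ofFn f) k (by omega) hnd)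
  have hinj : ∀ p ∈ ((multiPerms n 1) ×ˢ (Finset.univ : Finset (Fin (n-1) → Bool))),
      ∀ q ∈ ((multiPerms n 1) ×ˢ (Finset.univ : Finset (Fin (n-1) → Bool))),
      (fun p : List ℕ × (Fin (n-1) → Bool) => enc k k p.1 (List.ofFn p.2)) p
        = (fun p : List ℕ × (Fin (n-1) → Bool) => enc k k p.1 (List.ofFn p.2)) q → p = q := by
    intro p hp q hq heq
    rw [Finset.mem_product] at hp hq
    have h1 := enc_inj k hk p.1 q.1 (List.ofFn p.2) (List.ofFn q.2) k (by omega) le_rfl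
      (hσnd _ hp.1) (hσnd _ hq.1)
      (by rw [List.length_ofFn, hσlen _ hp.1]; omega)
      (by rw [List.length_ofFn, hσlen _ hq.1]; omega) heq
    exact Prod.ext h1.1 (List.ofFn_injective h1.2)
  have hcard : (Ank n k).card = 2 ^ (n - 1) * n.factorial := by
    rw [himg, Finset.card_image_of_injOn (fun p hp q hq h => hinj p hp q hq h),
      Finset.card_product]
    have h1 : (multiPerms n 1).card = n.factorial := by
      rw [multiPerms, List.toFinset_card_of_nodup
        (List.nodup_permutations _ (by rw [baseWord_one]; exact valsList_nodup n)),
        List.length_permutations]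
      congr 1
      rw [baseWord_one, valsList_length]
    rw [h1]
    simp [Finset.card_univ]
    ring
  refine ⟨?_, hcard⟩
  rw [himg, Finset.sum_image hinj, Finset.sum_product]
  have hX : ∀ σ ∈ multiPerms n 1,
      (∑ f : Fin (n-1) → Bool,
        (MvPolynomial.X 0 : MvPolynomial (Fin 2) ℚ) ^ des (enc k k σ (List.ofFn f))
          * (MvPolynomial.X 1) ^ plat (enc k k σ (List.ofFn f)))
      = (MvPolynomial.X 1 : MvPolynomial (Fin 2) ℚ) ^ ((k - 3) * n + 2)
          * ((MvPolynomial.X 1) ^ 2 + MvPolynomial.X 0) ^ (n - 1)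
          * (MvPolynomial.X 0) ^ des σ := by
    intro σ hσmem
    have hnd := hσnd σ hσmem
    have hlen := hσlen σ hσmem
    have key : ∀ f : Fin (n-1) → Bool,
        (MvPolynomial.X 0 : MvPolynomial (Fin 2) ℚ) ^ des (enc k k σ (List.ofFn f))
          * (MvPolynomial.X 1) ^ plat (enc k k σ (List.ofFn f))
        = ((MvPolynomial.X 1 : MvPolynomial (Fin 2) ℚ) ^ ((k - 3) * n + 2)
            * (MvPolynomial.X 0) ^ des σ)
          * ∏ i, (if f i then (MvPolynomial.X 0 : MvPolynomial (Fin 2) ℚ)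
              else (MvPolynomial.X 1) ^ 2) := by
      intro f
      have hslen : (List.ofFn f).length + 1 = σ.length := by
        rw [List.length_ofFn, hlen]; omega
      have hdes := enc_des k hk σ (List.ofFn f) k (by omega) le_rfl hnd hslen
      have hplat := enc_plat k hk σ (List.ofFn f) k (by omega) le_rfl hnd hslen
      rw [prod_ite_pow (MvPolynomial.X 0) ((MvPolynomial.X 1) ^ 2) (n-1) f]
      set W := (List.ofFn f).count true with hW
      have hWle : W ≤ n - 1 := by
        have h2 := List.count_le_length (l := List.ofFn f) (a := true)
        rw [List.length_ofFn] at h2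
        exact h2
      have he1 : (k - 1) + (k - 1) * ((List.ofFn f).length) = (k - 1) * n := by
        rw [List.length_ofFn]
        have : k - 1 + (k-1) * (n-1) = (k-1) * (1 + (n-1)) := by ring
        rw [this, show 1 + (n - 1) = n from by omega]
      have he2 : (k - 1) * n = (k - 3) * n + 2 * n := by
        rw [show k - 1 = (k - 3) + 2 from by omega, Nat.add_mul]
      have hplat2 : plat (enc k k σ (List.ofFn f))
          = ((k - 3) * n + 2) + 2 * ((n - 1) - W) := by
        omega
      rw [hdes, hplat2, pow_add, pow_add, ← pow_mul]
      ring
    rw [Finset.sum_congr rfl (fun f _ => key f), ← Finset.mul_sum,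
      sum_fun_bool_prod (n-1) (fun b => if b then (MvPolynomial.X 0 : MvPolynomial (Fin 2) ℚ)
        else (MvPolynomial.X 1) ^ 2)]
    simp only [if_true, if_false, Bool.false_eq_true]
    ring
  rw [Finset.sum_congr rfl hX, ← Finset.mul_sum]
end

section
/- Every nonnesting k-multipermutation is a k-canon permutation: if a word π of length kn with each value of [n] appearing k times has nonnesting underlying set partition (no pair of nested consecutive-occurrence arcs), then for every j in [k] the subsequence of j-th occurrences of each value is the same permutation of [n]; that is, B_n^k ⊆ C_n^k. -/
attribute [local instance] Classical.propDecidable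

/-- There is an arc between positions i < j if they hold consecutive occurrences of
the same value. -/
def hasArc (w : List ℕ) (i j : ℕ) : Prop :=
  i < j ∧ j < w.length ∧ w.getD i 0 = w.getD j 0 ∧
    ∀ r, i < r → r < j → w.getD r 0 ≠ w.getD i 0

/-- A word is nonnesting if no two arcs are nested. -/
def nonnestingWord (w : List ℕ) : Prop :=
  ¬ ∃ i j l m, i < j ∧ l < m ∧ hasArc w i m ∧ hasArc w j l

/-- The subsequence of j-th occurrences (from the left) of each value. -/
def jthOcc (w : List ℕ) (j : ℕ) : List ℕ :=
  ((List.range w.length).filter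
      (fun i => decide ((w.take (i+1)).count (w.getD i 0) = j))).map (fun i => w.getD i 0)
section AuxNNC

open List

/-- The list of positions of `j`-th occurrences. -/
noncomputable def posList (w : List ℕ) (j : ℕ) : List ℕ :=
  (List.range w.length).filter
      (fun i => decide ((w.take (i+1)).count (w.getD i 0) = j))

lemma jthOcc_eq_posList (w : List ℕ) (j : ℕ) :
    jthOcc w j = (posList w j).map (fun i => w.getD i 0) := rfl

lemma mem_posList {w : List ℕ} {j i : ℕ} :
    i ∈ posList w j ↔ i < w.length ∧ (w.take (i+1)).count (w.getD i 0) = j := by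
  simp [posList, List.mem_filter, List.mem_range]

lemma getD_eq_get {w : List ℕ} {i : ℕ} (h : i < w.length) : w.getD i 0 = w[i] :=
  List.getD_eq_getElem w 0 h

lemma cnt_succ {w : List ℕ} {v i : ℕ} (h : i < w.length) :
    (w.take (i+1)).count v = (w.take i).count v + if w.getD i 0 = v then 1 else 0 := by
  rw [List.take_succ, List.getElem?_eq_getElem h, List.count_append, getD_eq_get h]
  simp [List.count_singleton']

lemma cnt_mono {w : List ℕ} {v s t : ℕ} (h : s ≤ t) :
    (w.take s).count v ≤ (w.take t).count v := by
  have he : w.take s = (w.take t).take s := by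
    rw [List.take_take, Nat.min_eq_left h]
  rw [he]
  exact (List.take_prefix s (w.take t)).sublist.count_le v

lemma cnt_gap {w : List ℕ} {v s : ℕ} : ∀ {t : ℕ}, s ≤ t → t ≤ w.length →
    (∀ r, s ≤ r → r < t → w.getD r 0 ≠ v) →
    (w.take t).count v = (w.take s).count v := by
  intro t hst
  induction t, hst using Nat.le_induction with
  | base => intro _ _; rfl
  | succ t hst ih =>
    intro ht h
    have ht' : t < w.length := lt_of_lt_of_le (Nat.lt_succ_self t) ht
    rw [cnt_succ ht', if_neg (h t hst (Nat.lt_succ_self t))]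
    simpa using ih (le_of_lt ht') (fun r hr hr' => h r hr (hr'.trans (Nat.lt_succ_self t)))

lemma cnt_strict {w : List ℕ} {v i i' : ℕ} (h : i < i') (hi' : i' < w.length)
    (hv : w.getD i' 0 = v) :
    (w.take (i+1)).count v < (w.take (i'+1)).count v := by
  have h1 : (w.take (i+1)).count v ≤ (w.take i').count v := cnt_mono h
  rw [cnt_succ hi', if_pos hv]
  omega

/-- Uniqueness of the `j`-th occurrence of a fixed value. -/
lemma occ_unique {w : List ℕ} {i i' : ℕ} (hi : i < w.length) (hi' : i' < w.length)
    (hv : w.getD i 0 = w.getD i' 0)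
    (hc : (w.take (i+1)).count (w.getD i 0) = (w.take (i'+1)).count (w.getD i' 0)) :
    i = i' := by
  rcases lt_trichotomy i i' with h | h | h
  · exact absurd hc (by rw [hv]; exact Nat.ne_of_lt (cnt_strict h hi' rfl))
  · exact h
  · exact absurd hc.symm (by rw [hv]; exact Nat.ne_of_lt (cnt_strict h hi hv))

lemma exists_occ_of_mem {w : List ℕ} {v m : ℕ} (hv : v ∈ w.take m) :
    ∃ i, i < m ∧ i < w.length ∧ w.getD i 0 = v := by
  obtain ⟨r, hr, he⟩ := List.mem_iff_getElem.mp hv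
  have hr' := hr
  rw [List.length_take] at hr'
  have h1 : r < m := lt_of_lt_of_le hr' (min_le_left _ _)
  have h2 : r < w.length := lt_of_lt_of_le hr' (min_le_right _ _)
  refine ⟨r, h1, h2, ?_⟩
  rw [getD_eq_get h2, ← List.getElem_take (xs := w) (j := m) (h := hr)]
  exact he

/-- Previous occurrence of the same value. -/
noncomputable def prevOcc (w : List ℕ) (m : ℕ) : ℕ :=
  Nat.findGreatest (fun i => w.getD i 0 = w.getD m 0) (m - 1)

lemma prevOcc_spec {w : List ℕ} {m : ℕ}
    (hex : ∃ i, i < m ∧ w.getD i 0 = w.getD m 0) :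
    w.getD (prevOcc w m) 0 = w.getD m 0 ∧ prevOcc w m < m ∧
      ∀ r, prevOcc w m < r → r < m → w.getD r 0 ≠ w.getD m 0 := by
  obtain ⟨i, him, hiv⟩ := hex
  have h0 : 0 < m := Nat.pos_of_ne_zero (by rintro rfl; exact Nat.not_lt_zero i him)
  have hi' : i ≤ m - 1 := Nat.le_sub_one_of_lt him
  refine ⟨Nat.findGreatest_spec (P := fun i => w.getD i 0 = w.getD m 0) hi' hiv, ?_, ?_⟩
  · exact lt_of_le_of_lt (Nat.findGreatest_le _) (Nat.sub_lt h0 one_pos)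
  · intro r hr hrm
    exact Nat.findGreatest_is_greatest (P := fun i => w.getD i 0 = w.getD m 0)
      hr (Nat.le_sub_one_of_lt hrm)

lemma count_baseWord_s19 (n k : ℕ) : ∀ v, (baseWord n k).count v =
    if 1 ≤ v ∧ v ≤ n then k else 0 := by
  induction n with
  | zero =>
    intro v
    simp only [baseWord, List.range_zero, List.flatMap_nil, List.count_nil]
    rw [if_neg (by omega)]
  | succ n ih =>
    intro v
    have : baseWord (n+1) k = baseWord n k ++ List.replicate k (n+1) := by
      simp [baseWord, List.range_succ]
    rw [this, List.count_append, ih v, List.count_replicate]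
    simp only [beq_iff_eq]
    split_ifs <;> omega

end AuxNNC
section MainNNC

lemma step_arc {w : List ℕ} {j m : ℕ} (hj : 1 ≤ j) (hm : m ∈ posList w (j+1)) :
    hasArc w (prevOcc w m) m ∧ prevOcc w m ∈ posList w j := by
  obtain ⟨hml, hmc⟩ := mem_posList.mp hm
  set v := w.getD m 0 with hv
  have hc : (w.take m).count v = j := by
    have h := cnt_succ (w := w) (v := v) hml
    rw [if_pos rfl] at h
    omega
  have hmem : v ∈ w.take m := List.count_pos_iff.mp (by omega)
  obtain ⟨i, him, hil, hiv⟩ := exists_occ_of_mem hmem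
  obtain ⟨hpv, hpm, hpgap⟩ := prevOcc_spec (w := w) (m := m) ⟨i, him, hiv⟩
  set p := prevOcc w m with hp
  have hpl : p < w.length := hpm.trans hml
  have harc : hasArc w p m :=
    ⟨hpm, hml, hpv, fun r h1 h2 => by rw [hpv]; exact hpgap r h1 h2⟩
  refine ⟨harc, mem_posList.mpr ⟨hpl, ?_⟩⟩
  have hgap : (w.take m).count v = (w.take (p+1)).count v :=
    cnt_gap hpm (le_of_lt hml) (fun r hr hr' => hpgap r (by omega) hr')
  rw [hpv, ← hv]
  omega

lemma prevOcc_mono {w : List ℕ} {j m m' : ℕ} (hnn : nonnestingWord w) (hj : 1 ≤ j)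
    (hm : m ∈ posList w (j+1)) (hm' : m' ∈ posList w (j+1)) (hlt : m < m') :
    prevOcc w m < prevOcc w m' := by
  obtain ⟨ha, _⟩ := step_arc hj hm
  obtain ⟨ha', _⟩ := step_arc hj hm'
  rcases lt_trichotomy (prevOcc w m') (prevOcc w m) with h | h | h
  · exact absurd ⟨prevOcc w m', prevOcc w m, m, m', h, hlt, ha', ha⟩ hnn
  · exfalso
    have hveq : w.getD m 0 = w.getD m' 0 := by rw [← ha.2.2.1, ← h, ha'.2.2.1]
    have := occ_unique (mem_posList.mp hm).1 (mem_posList.mp hm').1 hveq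
      ((mem_posList.mp hm).2.trans (mem_posList.mp hm').2.symm)
    omega
  · exact h

lemma exists_succOcc {w : List ℕ} {n k j i : ℕ} (hw : w.Perm (baseWord n k))
    (hjk : j + 1 ≤ k) (hi : i ∈ posList w j) :
    ∃ m ∈ posList w (j+1), prevOcc w m = i := by
  obtain ⟨hil, hic⟩ := mem_posList.mp hi
  set v := w.getD i 0 with hv
  have hvw : v ∈ w := by rw [hv, getD_eq_get hil]; exact List.getElem_mem hil
  have hcw : w.count v = k := by
    have h0 : 0 < w.count v := List.count_pos_iff.mpr hvw
    rw [hw.count_eq v, count_baseWord_s19] at h0 ⊢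
    split_ifs at h0 ⊢ with h
    · rfl
    · omega
  have hsplit : (w.take (i+1)).count v + (w.drop (i+1)).count v = w.count v := by
    rw [← List.count_append, List.take_append_drop]
  have hmemd : v ∈ w.drop (i+1) := List.count_pos_iff.mp (by omega)
  obtain ⟨r, hr, hre⟩ := List.mem_iff_getElem.mp hmemd
  have hrl : i + 1 + r < w.length := by
    have h := hr; rw [List.length_drop] at h; omega
  have hval : w.getD (i+1+r) 0 = v := by
    rw [getD_eq_get hrl, ← List.getElem_drop (xs := w) (i := i+1) (h := hr)]
    exact hre
  have hQ : ∃ m, i < m ∧ m < w.length ∧ w.getD m 0 = v :=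
    ⟨i+1+r, by omega, hrl, hval⟩
  obtain ⟨m, him, hml, hmv, hgap⟩ :
      ∃ m, i < m ∧ m < w.length ∧ w.getD m 0 = v ∧
        ∀ s, i < s → s < m → w.getD s 0 ≠ v := by
    obtain ⟨him, hml, hmv⟩ := Nat.find_spec hQ
    refine ⟨Nat.find hQ, him, hml, hmv, ?_⟩
    intro s hs hsm hcontra
    exact Nat.find_min hQ hsm ⟨hs, hsm.trans hml, hcontra⟩
  have hcm : (w.take m).count v = (w.take (i+1)).count v :=
    cnt_gap him (le_of_lt hml) (fun s hs hs' => hgap s (by omega) hs')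
  have hcm1 : (w.take (m+1)).count v = j + 1 := by
    rw [cnt_succ hml, if_pos hmv]
    omega
  have hmmem : m ∈ posList w (j+1) := mem_posList.mpr ⟨hml, by rw [hmv]; exact hcm1⟩
  refine ⟨m, hmmem, ?_⟩
  have hiv' : w.getD i 0 = w.getD m 0 := by rw [← hv, hmv]
  obtain ⟨hpv, hpm, hpgap⟩ := prevOcc_spec (w := w) (m := m) ⟨i, him, hiv'⟩
  have hip : i ≤ prevOcc w m :=
    Nat.le_findGreatest (P := fun r => w.getD r 0 = w.getD m 0)
      (Nat.le_sub_one_of_lt him) hiv'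
  by_contra hne
  have hilt : i < prevOcc w m := lt_of_le_of_ne hip (fun h => hne h.symm)
  exact hgap (prevOcc w m) hilt hpm (by rw [hpv, hmv])

lemma jthOcc_step {w : List ℕ} {n k j : ℕ} (hw : w.Perm (baseWord n k))
    (hnn : nonnestingWord w) (hj : 1 ≤ j) (hjk : j + 1 ≤ k) :
    jthOcc w (j+1) = jthOcc w j := by
  have hnd : ∀ j', (posList w j').Nodup := fun j' => List.nodup_range.filter _
  have hsrt : ∀ j', (posList w j').Pairwise (· < ·) :=
    fun j' => List.pairwise_lt_range.filter _
  have key : posList w j = (posList w (j+1)).map (prevOcc w) := by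
    have hnd2 : ((posList w (j+1)).map (prevOcc w)).Nodup := by
      refine List.Nodup.map_on ?_ (hnd _)
      intro x hx y hy hxy
      have hveq : w.getD x 0 = w.getD y 0 := by
        rw [← (step_arc hj hx).1.2.2.1, hxy, (step_arc hj hy).1.2.2.1]
      exact occ_unique (mem_posList.mp hx).1 (mem_posList.mp hy).1 hveq
        ((mem_posList.mp hx).2.trans (mem_posList.mp hy).2.symm)
    have hperm : (posList w j).Perm ((posList w (j+1)).map (prevOcc w)) := by
      rw [List.perm_ext_iff_of_nodup (hnd _) hnd2]
      intro a
      constructor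
      · intro ha
        obtain ⟨m, hm, hpm⟩ := exists_succOcc hw hjk ha
        exact List.mem_map.mpr ⟨m, hm, hpm⟩
      · intro ha
        obtain ⟨m, hm, rfl⟩ := List.mem_map.mp ha
        exact (step_arc hj hm).2
    have hs2 : ((posList w (j+1)).map (prevOcc w)).Pairwise (· < ·) := by
      rw [List.pairwise_iff_getElem]
      intro a b ha hb hab
      rw [List.length_map] at ha hb
      simp only [List.getElem_map]
      refine prevOcc_mono hnn hj (List.getElem_mem ha) (List.getElem_mem hb) ?_
      exact List.pairwise_iff_getElem.mp (hsrt (j+1)) a b ha hb hab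
    haveI : IsAntisymm ℕ (· < ·) := ⟨fun a b h h' => absurd h' (lt_asymm h)⟩
    exact List.Perm.eq_of_pairwise (fun a b _ _ h h' => absurd h' (lt_asymm h)) (hsrt _) hs2 hperm
  rw [jthOcc_eq_posList, jthOcc_eq_posList, key, List.map_map]
  refine (List.map_congr_left fun m hm => ?_).symm
  simpa [Function.comp] using (step_arc hj hm).1.2.2.1

end MainNNC

/-- Every nonnesting k-multipermutation is a k-canon permutation: the subsequence of
j-th occurrences is the same for every j ∈ [k]. -/
theorem nonnesting_subset_canon (n k : ℕ) (w : List ℕ) (hw : w ∈ multiPerms n k)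
    (hnn : nonnestingWord w) (j : ℕ) (h1 : 1 ≤ j) (h2 : j ≤ k) :
    jthOcc w j = jthOcc w 1 := by
  have hperm : w.Perm (baseWord n k) := by
    simpa [multiPerms, List.mem_toFinset, List.mem_permutations] using hw
  clear hw
  revert h2
  induction j, h1 using Nat.le_induction with
  | base => intro _; rfl
  | succ j hj ih =>
    intro h2
    rw [jthOcc_step hperm hnn hj h2]
    exact ih (by omega)
end
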